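/- arXiv:1706.01157 — 11 statements merged into one kernel-verified Lean document; each statement's English description precedes it below -/
import Mathlib

section
/- Let G be a finite simple graph with no isolated vertices and no isolated edges, let H_0 = ONH(G), and let S be a fixed set of special vertices of H_0. Then every vertex of H_0 is contained in at most one special edge; consequently, the same holds in every residual hypergraph arising in a transversal game on H_0. -/
/- The open neighborhood hypergraph `ONH(G)` of a finite simple graph `G` has vertex
set `V(G)` and edge multiset `{N_G(v) : v ∈ V(G)}`; we represent its edges as the
family indexed by the vertices, `u ↦ N_G(u)` (so edges are counted with
multiplicity via their indices). -/

open Finset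

variable {V : Type*} [Fintype V] [DecidableEq V]

/-- `S` is a valid set of special vertices for `H₀ = ONH(G)`: every member of `S` has
degree 1 (a vertex lies in `deg_G` many edges of `H₀`, so degree-1 in `H₀` is degree-1
in `G`), and `S` is obtained by fixing, for each edge `N_G(u)` of `H₀` that contains at
least one degree-1 vertex, exactly one such degree-1 vertex. -/
def IsSpecialSet (G : SimpleGraph V) [DecidableRel G.Adj] (S : Finset V) : Prop :=
  (∀ v ∈ S, G.degree v = 1) ∧
    ∀ u : V, (∃ w ∈ G.neighborFinset u, G.degree w = 1) →
      ∃! v : V, v ∈ S ∧ v ∈ G.neighborFinset u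

/-- Indices (in the edge family `u ↦ N_G(u)` of `ONH(G)`) of the edges of the residual
hypergraph after the set `D` of vertices has been played: the edges disjoint from `D`.
The edge with index `u` is special iff `u ∈ S`. -/
def resEdges (G : SimpleGraph V) [DecidableRel G.Adj] (D : Finset V) : Finset V :=
  univ.filter fun u => Disjoint (G.neighborFinset u) D

/-- Vertex set of the residual hypergraph: the union of its edges. -/
def resVerts (G : SimpleGraph V) [DecidableRel G.Adj] (D : Finset V) : Finset V :=
  (resEdges G D).biUnion fun u => G.neighborFinset u

/-- Degree of `v` in the residual hypergraph (incident edges counted with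
multiplicity). -/
def resDeg (G : SimpleGraph V) [DecidableRel G.Adj] (D : Finset V) (v : V) : ℕ :=
  ((resEdges G D).filter fun u => v ∈ G.neighborFinset u).card

/-- `e` is an isolated edge of the residual hypergraph: it is an edge, and it forms a
connected component by itself (every residual edge meeting it coincides with it). -/
def IsIsolatedEdge (G : SimpleGraph V) [DecidableRel G.Adj] (D : Finset V) (e : Finset V) : Prop :=
  (∃ u ∈ resEdges G D, G.neighborFinset u = e) ∧
    ∀ w ∈ e, ∀ u ∈ resEdges G D, w ∈ G.neighborFinset u → G.neighborFinset u = e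

/-- The number `x(H)` of Type-X components of the residual hypergraph: connected
components consisting of a single edge that contains at least two non-special
vertices. -/
def numTypeX (G : SimpleGraph V) [DecidableRel G.Adj] (S D : Finset V) : ℕ :=
  (((resEdges G D).image fun u => G.neighborFinset u).filter fun e =>
    (∀ w ∈ e, ∀ u ∈ resEdges G D, w ∈ G.neighborFinset u → G.neighborFinset u = e) ∧
      2 ≤ (e \ S).card).card

/-- The weight `f(H)` of the residual hypergraph determined by the played set `D`:
`13·#(non-special vertices) + 7·#(special vertices) + 9·#(non-special edges)
+ 15·#(special edges) − 7·x(H)`, edges counted with multiplicity. -/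
def hweight (G : SimpleGraph V) [DecidableRel G.Adj] (S D : Finset V) : ℤ :=
  13 * ((resVerts G D \ S).card : ℤ) + 7 * ((resVerts G D ∩ S).card : ℤ) +
    9 * ((resEdges G D \ S).card : ℤ) + 15 * ((resEdges G D ∩ S).card : ℤ) -
    7 * (numTypeX G S D : ℤ)

/-- The played sets `D` that can arise in a (legal) transversal game on `ONH(G)`:
each selected vertex must cover at least one previously uncovered edge. -/
inductive TGReachable (G : SimpleGraph V) [DecidableRel G.Adj] : Finset V → Prop
  | empty : TGReachable G ∅
  | play (D : Finset V) (v : V) (hD : TGReachable G D)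
      (hv : ∃ u : V, v ∈ G.neighborFinset u ∧ Disjoint (G.neighborFinset u) D) :
      TGReachable G (insert v D)

/-- `v` and `u` share an edge of the residual hypergraph. -/
def ShareEdge (G : SimpleGraph V) [DecidableRel G.Adj] (D : Finset V) (v u : V) : Prop :=
  ∃ w ∈ resEdges G D, v ∈ G.neighborFinset w ∧ u ∈ G.neighborFinset w

/-- Observation 1(iii): every vertex of `H₀` is contained in at most one special edge
(special edges being counted with multiplicity, indexed by the special vertices), and
consequently the same holds in every residual hypergraph arising in a transversal
game on `H₀`. -/
theorem vertex_at_most_one_special_edge (G : SimpleGraph V) [DecidableRel G.Adj] (S : Finset V)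
    (hiso : ∀ v : V, 0 < G.degree v)
    (hisoedge : ∀ v w : V, G.Adj v w → ¬(G.degree v = 1 ∧ G.degree w = 1))
    (hS : IsSpecialSet G S) :
    (∀ w : V, (S.filter fun v => w ∈ G.neighborFinset v).card ≤ 1) ∧
      ∀ D : Finset V, TGReachable G D → ∀ w ∈ resVerts G D,
        ((S ∩ resEdges G D).filter fun v => w ∈ G.neighborFinset v).card ≤ 1 := by
  obtain ⟨hdeg, huniq⟩ := hS
  have key : ∀ w : V, (S.filter fun v => w ∈ G.neighborFinset v).card ≤ 1 := by
    intro w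
    rw [Finset.card_le_one]
    intro a ha b hb
    simp only [Finset.mem_filter, SimpleGraph.mem_neighborFinset] at ha hb
    obtain ⟨haS, haw⟩ := ha
    obtain ⟨hbS, hbw⟩ := hb
    obtain ⟨v, _, hv⟩ := huniq w ⟨a, by simp [haw.symm], hdeg a haS⟩
    rw [hv a ⟨haS, by simp [haw.symm]⟩, hv b ⟨hbS, by simp [hbw.symm]⟩]
  refine ⟨key, fun D _ w _ => ?_⟩
  calc ((S ∩ resEdges G D).filter fun v => w ∈ G.neighborFinset v).card
      ≤ (S.filter fun v => w ∈ G.neighborFinset v).card :=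
        Finset.card_le_card (Finset.filter_subset_filter _ Finset.inter_subset_left)
    _ ≤ 1 := key w
end

section
/- Let G be a finite simple graph with no isolated vertices and no isolated edges, let H_0 = ONH(G), and let S be a fixed set of special vertices of H_0. Then no special edge of H_0 contains a special vertex; consequently, the same holds in every residual hypergraph arising in a transversal game on H_0. -/
/- The open neighborhood hypergraph `ONH(G)` of a finite simple graph `G` has vertex
set `V(G)` and edge multiset `{N_G(v) : v ∈ V(G)}`; we represent its edges as the
family indexed by the vertices, `u ↦ N_G(u)` (so edges are counted with
multiplicity via their indices). -/

open Finset

variable {V : Type*} [Fintype V] [DecidableEq V]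

/-- Observation 1(iv): no special edge of `H₀` contains a special vertex, and
consequently the same holds in every residual hypergraph arising in a transversal
game on `H₀`. -/
theorem special_edge_no_special_vertex (G : SimpleGraph V) [DecidableRel G.Adj] (S : Finset V)
    (hiso : ∀ v : V, 0 < G.degree v)
    (hisoedge : ∀ v w : V, G.Adj v w → ¬(G.degree v = 1 ∧ G.degree w = 1))
    (hS : IsSpecialSet G S) :
    (∀ v ∈ S, ∀ w ∈ G.neighborFinset v, w ∉ S) ∧
      ∀ D : Finset V, TGReachable G D → ∀ v ∈ S ∩ resEdges G D,
        ∀ w ∈ G.neighborFinset v, w ∈ resVerts G D → w ∉ S := by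
  have key : ∀ v ∈ S, ∀ w ∈ G.neighborFinset v, w ∉ S := by
    intro v hv w hw hwS
    exact hisoedge v w (SimpleGraph.mem_neighborFinset .. |>.mp hw)
      ⟨hS.1 v hv, hS.1 w hwS⟩
  exact ⟨key, fun D _ v hv w hw _ => key v (Finset.mem_inter.mp hv).1 w hw⟩
end

section
/- Let H be a residual hypergraph arising from H_0 = ONH(G) with special set S, and let v ∈ V(H) belong to an edge e of H that forms a connected component of H by itself (an isolated edge). Then playing v decreases the weight f by at least 28, i.e., f(H) − f(H') ≥ 28 where H' is the residual hypergraph after v is played. -/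
/- The open neighborhood hypergraph `ONH(G)` of a finite simple graph `G` has vertex
set `V(G)` and edge multiset `{N_G(v) : v ∈ V(G)}`; we represent its edges as the
family indexed by the vertices, `u ↦ N_G(u)` (so edges are counted with
multiplicity via their indices). -/

open Finset

variable {V : Type*} [Fintype V] [DecidableEq V]

set_option maxHeartbeats 1000000 in
/-- Lemma 3: if `v` belongs to an isolated edge (a single-edge component) of the
residual hypergraph, then playing `v` decreases the weight `f` by at least 28. -/
theorem play_isolated_edge_decrease (G : SimpleGraph V) [DecidableRel G.Adj] (S : Finset V)
    (hiso : ∀ v : V, 0 < G.degree v)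
    (hisoedge : ∀ v w : V, G.Adj v w → ¬(G.degree v = 1 ∧ G.degree w = 1))
    (hS : IsSpecialSet G S)
    (D : Finset V) (hD : TGReachable G D) (v : V) (e : Finset V)
    (he : IsIsolatedEdge G D e) (hv : v ∈ e) :
    28 ≤ hweight G S D - hweight G S (insert v D) := by
  classical
  obtain ⟨⟨u₀, hu₀R, hu₀e⟩, hcomp⟩ := he
  have hmemE : ∀ (D' : Finset V) (u : V),
      u ∈ resEdges G D' ↔ Disjoint (G.neighborFinset u) D' := by
    intro D' u; simp [resEdges]
  have heD : Disjoint e D := hu₀e ▸ (hmemE D u₀).mp hu₀R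
  set T : Finset V := (resEdges G D).filter (fun u => v ∈ G.neighborFinset u) with hTdef
  have hTmem : ∀ u : V, u ∈ T ↔ u ∈ resEdges G D ∧ G.neighborFinset u = e := by
    intro u
    constructor
    · intro h
      have h' := Finset.mem_filter.mp h
      exact ⟨h'.1, hcomp v hv u h'.1 h'.2⟩
    · rintro ⟨h1, h2⟩
      exact Finset.mem_filter.mpr ⟨h1, h2 ▸ hv⟩
  have hTsub : T ⊆ resEdges G D := Finset.filter_subset _ _
  have hE' : resEdges G (insert v D) = resEdges G D \ T := by
    ext u
    constructor
    · intro h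
      have hd := (hmemE _ u).mp h
      rw [Finset.disjoint_insert_right] at hd
      exact Finset.mem_sdiff.mpr ⟨(hmemE D u).mpr hd.2,
        fun hT => hd.1 (Finset.mem_filter.mp hT).2⟩
    · intro h
      obtain ⟨h1, h2⟩ := Finset.mem_sdiff.mp h
      have hd : Disjoint (G.neighborFinset u) D := (hmemE D u).mp h1
      have hvn : v ∉ G.neighborFinset u := fun hvn => h2 (Finset.mem_filter.mpr ⟨h1, hvn⟩)
      exact (hmemE _ u).mpr (Finset.disjoint_insert_right.mpr ⟨hvn, hd⟩)
  have hu₀T : u₀ ∈ T := (hTmem u₀).mpr ⟨hu₀R, hu₀e⟩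
  have hV' : resVerts G (insert v D) = resVerts G D \ e := by
    ext w
    simp only [resVerts, Finset.mem_biUnion, Finset.mem_sdiff]
    constructor
    · rintro ⟨u, huE', hw⟩
      have huE : u ∈ resEdges G D := (hE' ▸ Finset.sdiff_subset) huE'
      refine ⟨⟨u, huE, hw⟩, fun hwe => ?_⟩
      have hne := hcomp w hwe u huE hw
      have : u ∈ T := (hTmem u).mpr ⟨huE, hne⟩
      exact ((Finset.mem_sdiff.mp (hE' ▸ huE')).2 this)
    · rintro ⟨⟨u, huE, hw⟩, hwe⟩
      refine ⟨u, hE' ▸ Finset.mem_sdiff.mpr ⟨huE, fun hT => ?_⟩, hw⟩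
      exact hwe (((hTmem u).mp hT).2 ▸ hw)
  have heV : e ⊆ resVerts G D := by
    intro w hw
    exact Finset.mem_biUnion.mpr ⟨u₀, hu₀R, hu₀e ▸ hw⟩
  -- card equations
  have h1 : (resVerts G D \ S).card = (resVerts G (insert v D) \ S).card + (e \ S).card := by
    rw [hV']
    have hsub : e \ S ⊆ resVerts G D \ S := Finset.sdiff_subset_sdiff heV (le_refl _)
    have : (resVerts G D \ e) \ S = (resVerts G D \ S) \ (e \ S) := by
      ext w; simp only [Finset.mem_sdiff]; tauto
    rw [this, Finset.card_sdiff_add_card_eq_card hsub]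
  have h2 : (resVerts G D ∩ S).card = (resVerts G (insert v D) ∩ S).card + (e ∩ S).card := by
    rw [hV']
    have hsub : e ∩ S ⊆ resVerts G D ∩ S := Finset.inter_subset_inter heV (le_refl _)
    have : (resVerts G D \ e) ∩ S = (resVerts G D ∩ S) \ (e ∩ S) := by
      ext w; simp only [Finset.mem_sdiff, Finset.mem_inter]; tauto
    rw [this, Finset.card_sdiff_add_card_eq_card hsub]
  have h3 : (resEdges G D \ S).card = (resEdges G (insert v D) \ S).card + (T \ S).card := by
    rw [hE']
    have hsub : T \ S ⊆ resEdges G D \ S := Finset.sdiff_subset_sdiff hTsub (le_refl _)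
    have : (resEdges G D \ T) \ S = (resEdges G D \ S) \ (T \ S) := by
      ext w; simp only [Finset.mem_sdiff]; tauto
    rw [this, Finset.card_sdiff_add_card_eq_card hsub]
  have h4 : (resEdges G D ∩ S).card = (resEdges G (insert v D) ∩ S).card + (T ∩ S).card := by
    rw [hE']
    have hsub : T ∩ S ⊆ resEdges G D ∩ S := Finset.inter_subset_inter hTsub (le_refl _)
    have : (resEdges G D \ T) ∩ S = (resEdges G D ∩ S) \ (T ∩ S) := by
      ext w; simp only [Finset.mem_sdiff, Finset.mem_inter]; tauto
    rw [this, Finset.card_sdiff_add_card_eq_card hsub]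
  -- Type-X preservation
  have hpres : ∀ e' : Finset V,
      e' ∈ (((resEdges G D).image fun u => G.neighborFinset u).filter fun e' =>
        (∀ w ∈ e', ∀ u ∈ resEdges G D, w ∈ G.neighborFinset u → G.neighborFinset u = e') ∧
          2 ≤ (e' \ S).card) → e' ≠ e →
      e' ∈ (((resEdges G (insert v D)).image fun u => G.neighborFinset u).filter fun e' =>
        (∀ w ∈ e', ∀ u ∈ resEdges G (insert v D), w ∈ G.neighborFinset u →
          G.neighborFinset u = e') ∧ 2 ≤ (e' \ S).card) := by
    intro e' h hne
    have hmf := Finset.mem_filter.mp h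
    have himg := hmf.1
    have hcond := hmf.2.1
    have hcard := hmf.2.2
    obtain ⟨u, huD, rfl⟩ := Finset.mem_image.mp himg
    have hvN : v ∉ G.neighborFinset u := fun hvN =>
      hne (hcomp v hv u huD hvN)
    have huD' : u ∈ resEdges G (insert v D) :=
      hE' ▸ Finset.mem_sdiff.mpr ⟨huD, fun hT => hvN (Finset.mem_filter.mp hT).2⟩
    refine Finset.mem_filter.mpr ⟨Finset.mem_image_of_mem _ huD', ?_, hcard⟩
    intro w hw u' hu' hwu'
    exact hcond w hw u' ((hE' ▸ Finset.sdiff_subset) hu') hwu'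
  -- basic counts
  have hcardNF : ∀ w : V, (G.neighborFinset w).card = G.degree w := fun _ => rfl
  have he1 : 1 ≤ e.card := by
    have := hiso u₀
    rw [← hcardNF u₀, hu₀e] at this
    omega
  have habe : (e \ S).card + (e ∩ S).card = e.card := Finset.card_sdiff_add_card_inter e S
  have hcdT : (T \ S).card + (T ∩ S).card = T.card := Finset.card_sdiff_add_card_inter T S
  have hT1 : 1 ≤ T.card := Finset.card_pos.mpr ⟨u₀, hu₀T⟩
  have hb1 : (e ∩ S).card ≤ 1 := by
    by_contra hcon
    push_neg at hcon
    obtain ⟨a, ha, b, hb, hab⟩ := Finset.one_lt_card.mp hcon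
    obtain ⟨haE, haS⟩ := Finset.mem_inter.mp ha
    obtain ⟨hbE, hbS⟩ := Finset.mem_inter.mp hb
    have hdeg : ∃ w ∈ G.neighborFinset u₀, G.degree w = 1 :=
      ⟨a, hu₀e ▸ haE, hS.1 a haS⟩
    obtain ⟨s, _, huniq⟩ := hS.2 u₀ hdeg
    exact hab ((huniq a ⟨haS, hu₀e ▸ haE⟩).trans (huniq b ⟨hbS, hu₀e ▸ hbE⟩).symm)
  -- the weight difference
  have hgoal : ∀ X : ℕ, numTypeX G S D ≤ numTypeX G S (insert v D) + X →
      (28 : ℤ) + 7 * X ≤ 13 * (e \ S).card + 7 * (e ∩ S).card + 9 * (T \ S).card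
        + 15 * (T ∩ S).card →
      28 ≤ hweight G S D - hweight G S (insert v D) := by
    intro X hX hsum
    simp only [hweight, h1, h2, h3, h4]
    push_cast
    have hXz : (numTypeX G S D : ℤ) ≤ (numTypeX G S (insert v D) : ℤ) + X := by
      exact_mod_cast hX
    linarith
  by_cases ha2 : 2 ≤ (e \ S).card
  · -- e may be Type X; loss of at most one Type-X component
    have hX : numTypeX G S D ≤ numTypeX G S (insert v D) + 1 := by
      have hsub : (((resEdges G D).image fun u => G.neighborFinset u).filter fun e' =>
          (∀ w ∈ e', ∀ u ∈ resEdges G D, w ∈ G.neighborFinset u → G.neighborFinset u = e') ∧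
            2 ≤ (e' \ S).card) ⊆
          insert e (((resEdges G (insert v D)).image fun u => G.neighborFinset u).filter
            fun e' => (∀ w ∈ e', ∀ u ∈ resEdges G (insert v D), w ∈ G.neighborFinset u →
              G.neighborFinset u = e') ∧ 2 ≤ (e' \ S).card) := by
        intro e' h
        by_cases hne : e' = e
        · exact hne ▸ Finset.mem_insert_self _ _
        · exact Finset.mem_insert_of_mem (hpres e' h hne)
      calc numTypeX G S D ≤ _ := Finset.card_le_card hsub
        _ ≤ numTypeX G S (insert v D) + 1 := Finset.card_insert_le _ _
    refine hgoal 1 hX ?_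
    have : 1 ≤ (T \ S).card + (T ∩ S).card := hcdT ▸ hT1
    have h26 : (2 : ℤ) ≤ ((e \ S).card : ℤ) := by exact_mod_cast ha2
    have h9 : (1 : ℤ) ≤ ((T \ S).card : ℤ) + ((T ∩ S).card : ℤ) := by exact_mod_cast this
    push_cast
    linarith
  · -- e is not Type X, so no Type-X component is lost
    have hX : numTypeX G S D ≤ numTypeX G S (insert v D) + 0 := by
      rw [Nat.add_zero]
      refine Finset.card_le_card fun e' h => hpres e' h ?_
      rintro rfl
      exact ha2 (Finset.mem_filter.mp h).2.2
    refine hgoal 0 hX ?_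
    push_neg at ha2
    have hcd1 : 1 ≤ (T \ S).card + (T ∩ S).card := hcdT ▸ hT1
    by_cases ha0 : (e \ S).card = 0
    · -- impossible: e would be a single special vertex, forcing an isolated edge in G
      exfalso
      have hecard : e.card = 1 := by omega
      have hsube : e ⊆ S := by
        intro w hw
        by_contra hws
        have hmem : w ∈ e \ S := Finset.mem_sdiff.mpr ⟨hw, hws⟩
        rw [Finset.card_eq_zero.mp ha0] at hmem
        exact absurd hmem (Finset.notMem_empty w)
      obtain ⟨s, hse⟩ := Finset.card_eq_one.mp hecard
      have hsS : s ∈ S := hsube (hse ▸ Finset.mem_singleton_self s)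
      have hadj : G.Adj u₀ s := by
        rw [← SimpleGraph.mem_neighborFinset, hu₀e, hse]
        exact Finset.mem_singleton_self s
      refine hisoedge u₀ s hadj ⟨?_, hS.1 s hsS⟩
      rw [← hcardNF u₀, hu₀e, hecard]
    · have ha1 : (e \ S).card = 1 := by omega
      by_cases hb0 : (e ∩ S).card = 0
      · -- e = {w}, w non-special; the special leaf s of w gives a removed special edge
        have hecard : e.card = 1 := by omega
        obtain ⟨w, hwe⟩ := Finset.card_eq_one.mp hecard
        have hadj : G.Adj u₀ w := by
          rw [← SimpleGraph.mem_neighborFinset, hu₀e, hwe]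
          exact Finset.mem_singleton_self w
        have hdu₀ : G.degree u₀ = 1 := by
          rw [← hcardNF u₀, hu₀e, hecard]
        have hdeg : ∃ w' ∈ G.neighborFinset w, G.degree w' = 1 :=
          ⟨u₀, SimpleGraph.mem_neighborFinset _ _ _ |>.mpr hadj.symm, hdu₀⟩
        obtain ⟨s, ⟨hsS, hsN⟩, _⟩ := hS.2 w hdeg
        have hds : G.degree s = 1 := hS.1 s hsS
        have hwNs : w ∈ G.neighborFinset s :=
          SimpleGraph.mem_neighborFinset _ _ _ |>.mpr
            ((SimpleGraph.mem_neighborFinset _ _ _ |>.mp hsN).symm)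
        have hNs : G.neighborFinset s = e := by
          rw [hwe]
          have hcs : (G.neighborFinset s).card = 1 := by rw [hcardNF]; exact hds
          obtain ⟨x, hx⟩ := Finset.card_eq_one.mp hcs
          rw [hx] at hwNs ⊢
          rw [Finset.mem_singleton.mp hwNs]
        have hsT : s ∈ T := (hTmem s).mpr ⟨(hmemE D s).mpr (hNs ▸ heD), hNs⟩
        have hd1 : 1 ≤ (T ∩ S).card :=
          Finset.card_pos.mpr ⟨s, Finset.mem_inter.mpr ⟨hsT, hsS⟩⟩
        push_cast [ha1, hb0]
        have hz : (1 : ℤ) ≤ ((T ∩ S).card : ℤ) := by exact_mod_cast hd1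
        linarith
      · have hb1' : (e ∩ S).card = 1 := by omega
        push_cast [ha1, hb1']
        have hz : (1 : ℤ) ≤ ((T \ S).card : ℤ) + ((T ∩ S).card : ℤ) := by exact_mod_cast hcd1
        linarith
end

section
/- Let H be a residual hypergraph arising from H_0 = ONH(G) with special set S, and suppose H has at least one edge. Then playing any vertex v ∈ V(H) decreases the weight f by at least 16, i.e., f(H) − f(H') ≥ 16 where H' is the residual hypergraph after v is played. -/
/- The open neighborhood hypergraph `ONH(G)` of a finite simple graph `G` has vertex
set `V(G)` and edge multiset `{N_G(v) : v ∈ V(G)}`; we represent its edges as the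
family indexed by the vertices, `u ↦ N_G(u)` (so edges are counted with
multiplicity via their indices). -/

open Finset

variable {V : Type*} [Fintype V] [DecidableEq V]

/-- Lemma 4: if the residual hypergraph has at least one edge, then playing any vertex
of it decreases the weight `f` by at least 16. -/
theorem any_play_decrease_sixteen (G : SimpleGraph V) [DecidableRel G.Adj] (S : Finset V)
    (hiso : ∀ v : V, 0 < G.degree v)
    (hisoedge : ∀ v w : V, G.Adj v w → ¬(G.degree v = 1 ∧ G.degree w = 1))
    (hS : IsSpecialSet G S)
    (D : Finset V) (hD : TGReachable G D) (hE : (resEdges G D).Nonempty)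
    (v : V) (hv : v ∈ resVerts G D) :
    16 ≤ hweight G S D - hweight G S (insert v D) := by
  classical
  clear hiso hisoedge hS hD hE
  -- basic facts about the residual hypergraph after playing `v`
  have hEsub : resEdges G (insert v D) ⊆ resEdges G D := by
    intro u hu
    simp only [resEdges, mem_filter, mem_univ, true_and] at hu ⊢
    exact hu.mono_right (subset_insert _ _)
  have hvnot : ∀ u ∈ resEdges G (insert v D), v ∉ G.neighborFinset u := by
    intro u hu hvmem
    simp only [resEdges, mem_filter, mem_univ, true_and] at hu
    exact disjoint_left.mp hu hvmem (mem_insert_self v D)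
  have hback : ∀ u ∈ resEdges G D, v ∉ G.neighborFinset u → u ∈ resEdges G (insert v D) := by
    intro u hu hvu
    simp only [resEdges, mem_filter, mem_univ, true_and] at hu ⊢
    exact Finset.disjoint_insert_right.mpr ⟨hvu, hu⟩
  have hVsub : resVerts G (insert v D) ⊆ resVerts G D := by
    intro w hw
    simp only [resVerts, mem_biUnion] at hw ⊢
    obtain ⟨u, hu, hwu⟩ := hw
    exact ⟨u, hEsub hu, hwu⟩
  have hvV' : v ∉ resVerts G (insert v D) := by
    simp only [resVerts, mem_biUnion]
    rintro ⟨u, hu, hvu⟩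
    exact hvnot u hu hvu
  obtain ⟨u₀, hu₀, hvu₀⟩ : ∃ u ∈ resEdges G D, v ∈ G.neighborFinset u := by
    simpa [resVerts, mem_biUnion] using hv
  have hu₀' : u₀ ∉ resEdges G (insert v D) := fun h => hvnot u₀ h hvu₀
  -- at least one edge disappears
  have hedge : (resEdges G (insert v D)).card + 1 ≤ (resEdges G D).card := by
    have h1 : (resEdges G D \ resEdges G (insert v D)).card + (resEdges G (insert v D)).card
        = (resEdges G D).card := Finset.card_sdiff_add_card_eq_card hEsub
    have h2 : u₀ ∈ resEdges G D \ resEdges G (insert v D) := mem_sdiff.mpr ⟨hu₀, hu₀'⟩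
    have h3 : 1 ≤ (resEdges G D \ resEdges G (insert v D)).card := card_pos.mpr ⟨u₀, h2⟩
    omega
  -- the vertex `v` disappears
  have hvert : (resVerts G (insert v D)).card + 1 ≤ (resVerts G D).card := by
    have h1 : (resVerts G D \ resVerts G (insert v D)).card + (resVerts G (insert v D)).card
        = (resVerts G D).card := Finset.card_sdiff_add_card_eq_card hVsub
    have h2 : v ∈ resVerts G D \ resVerts G (insert v D) := mem_sdiff.mpr ⟨hv, hvV'⟩
    have h3 : 1 ≤ (resVerts G D \ resVerts G (insert v D)).card := card_pos.mpr ⟨v, h2⟩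
    omega
  -- partition of vertices / edges along `S`
  have hVpart : (resVerts G D \ S).card + (resVerts G D ∩ S).card = (resVerts G D).card :=
    Finset.card_sdiff_add_card_inter _ _
  have hVpart' : (resVerts G (insert v D) \ S).card + (resVerts G (insert v D) ∩ S).card
      = (resVerts G (insert v D)).card := Finset.card_sdiff_add_card_inter _ _
  have hEpart : (resEdges G D \ S).card + (resEdges G D ∩ S).card = (resEdges G D).card :=
    Finset.card_sdiff_add_card_inter _ _
  have hEpart' : (resEdges G (insert v D) \ S).card + (resEdges G (insert v D) ∩ S).card
      = (resEdges G (insert v D)).card := Finset.card_sdiff_add_card_inter _ _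
  -- componentwise monotonicity
  have hVn : (resVerts G (insert v D) \ S).card ≤ (resVerts G D \ S).card :=
    card_le_card (sdiff_subset_sdiff hVsub le_rfl)
  have hVs : (resVerts G (insert v D) ∩ S).card ≤ (resVerts G D ∩ S).card :=
    card_le_card (inter_subset_inter hVsub le_rfl)
  have hEn : (resEdges G (insert v D) \ S).card ≤ (resEdges G D \ S).card :=
    card_le_card (sdiff_subset_sdiff hEsub le_rfl)
  have hEs : (resEdges G (insert v D) ∩ S).card ≤ (resEdges G D ∩ S).card :=
    card_le_card (inter_subset_inter hEsub le_rfl)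
  -- the set of Type-X edges
  set XD := (((resEdges G D).image fun u => G.neighborFinset u).filter fun e =>
    (∀ w ∈ e, ∀ u ∈ resEdges G D, w ∈ G.neighborFinset u → G.neighborFinset u = e) ∧
      2 ≤ (e \ S).card) with hXD
  set XD' := (((resEdges G (insert v D)).image fun u => G.neighborFinset u).filter fun e =>
    (∀ w ∈ e, ∀ u ∈ resEdges G (insert v D), w ∈ G.neighborFinset u → G.neighborFinset u = e) ∧
      2 ≤ (e \ S).card) with hXD'
  have hxD : numTypeX G S D = XD.card := rfl
  have hxD' : numTypeX G S (insert v D) = XD'.card := rfl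
  -- a Type-X edge of `H` not containing `v` stays Type-X in `H'`
  have hpersist : ∀ e ∈ XD, v ∉ e → e ∈ XD' := by
    intro e he hve
    rw [hXD, mem_filter, mem_image] at he
    obtain ⟨⟨u, hu, hue⟩, hiso, hcard⟩ := he
    have hu' : u ∈ resEdges G (insert v D) := hback u hu (by rw [hue]; exact hve)
    rw [hXD', mem_filter, mem_image]
    refine ⟨⟨u, hu', hue⟩, ?_, hcard⟩
    intro w hw u' hu'' hwu'
    exact hiso w hw u' (hEsub hu'') hwu'
  by_cases hX : ∃ e ∈ XD, v ∈ e
  · -- Case B: a Type-X edge contains `v`; it is removed with all its vertices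
    obtain ⟨e, he, hve⟩ := hX
    have he' := he
    rw [hXD, mem_filter, mem_image] at he'
    obtain ⟨⟨u, hu, hue⟩, hiso, hcard⟩ := he'
    -- no vertex of `e` survives
    have hegone : ∀ w ∈ e, w ∉ resVerts G (insert v D) := by
      intro w hw hw'
      simp only [resVerts, mem_biUnion] at hw'
      obtain ⟨u', hu', hwu'⟩ := hw'
      have := hiso w hw u' (hEsub hu') hwu'
      exact hvnot u' hu' (this ▸ hve)
    have heV : e ⊆ resVerts G D := by
      intro w hw
      simp only [resVerts, mem_biUnion]
      exact ⟨u, hu, hue ▸ hw⟩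
    -- at least two non-special vertices disappear
    have hVn2 : (resVerts G (insert v D) \ S).card + 2 ≤ (resVerts G D \ S).card := by
      have hsub2 : e \ S ⊆ (resVerts G D \ S) \ (resVerts G (insert v D) \ S) := by
        intro w hw
        rw [mem_sdiff] at hw
        refine mem_sdiff.mpr ⟨mem_sdiff.mpr ⟨heV hw.1, hw.2⟩, ?_⟩
        rw [mem_sdiff]
        exact fun h => hegone w hw.1 h.1
      have h1 := card_le_card hsub2
      have h2 : ((resVerts G D \ S) \ (resVerts G (insert v D) \ S)).card
            + (resVerts G (insert v D) \ S).card = (resVerts G D \ S).card :=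
        Finset.card_sdiff_add_card_eq_card (sdiff_subset_sdiff hVsub le_rfl)
      omega
    -- `x` drops by at most one: every other Type-X edge persists
    have hxdrop : XD.card ≤ XD'.card + 1 := by
      have hsub : XD \ {e} ⊆ XD' := by
        intro e' he'
        rw [mem_sdiff, mem_singleton] at he'
        obtain ⟨he'X, hne⟩ := he'
        refine hpersist e' he'X ?_
        intro hve'
        have he'' := he'X
        rw [hXD, mem_filter, mem_image] at he''
        obtain ⟨⟨u', hu', hue'⟩, hiso', _⟩ := he''
        exact hne (hue.symm.trans (hiso' v hve' u hu (hue ▸ hve))).symm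
      have h1 : XD.card ≤ (XD \ {e}).card + ({e} : Finset (Finset V)).card :=
        Finset.card_le_card_sdiff_add_card
      have h2 := card_le_card hsub
      simp only [card_singleton] at h1
      omega
    simp only [hweight]
    rw [hxD, hxD']
    push_cast
    omega
  · -- Case A: no Type-X edge contains `v`, so `x` does not decrease
    push_neg at hX
    have hxmono : XD.card ≤ XD'.card :=
      card_le_card fun e he => hpersist e he (hX e he)
    simp only [hweight]
    rw [hxD, hxD']
    push_cast
    omega
end

section
/- Let H be a residual hypergraph arising from H_0 = ONH(G) with special set S. If a vertex v ∈ V(H) has degree at least 3 in H (i.e., v is contained in at least three edges of H), then playing v decreases the weight f by at least 40. -/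
/- The open neighborhood hypergraph `ONH(G)` of a finite simple graph `G` has vertex
set `V(G)` and edge multiset `{N_G(v) : v ∈ V(G)}`; we represent its edges as the
family indexed by the vertices, `u ↦ N_G(u)` (so edges are counted with
multiplicity via their indices). -/

open Finset

variable {V : Type*} [Fintype V] [DecidableEq V]

/-- Auxiliary: the Finset of Type-X component edge-sets. -/
def TXset (G : SimpleGraph V) [DecidableRel G.Adj] (S D : Finset V) : Finset (Finset V) :=
  ((resEdges G D).image fun u => G.neighborFinset u).filter fun e =>
    (∀ w ∈ e, ∀ u ∈ resEdges G D, w ∈ G.neighborFinset u → G.neighborFinset u = e) ∧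
      2 ≤ (e \ S).card

lemma numTypeX_eq_TXset (G : SimpleGraph V) [DecidableRel G.Adj] (S D : Finset V) :
    numTypeX G S D = (TXset G S D).card := rfl

/-- If a vertex `v` of the residual hypergraph has degree at least 3, then playing
`v` decreases the weight `f` by at least 40. -/
theorem play_degree_three_decrease (G : SimpleGraph V) [DecidableRel G.Adj] (S : Finset V)
    (hiso : ∀ v : V, 0 < G.degree v)
    (hisoedge : ∀ v w : V, G.Adj v w → ¬(G.degree v = 1 ∧ G.degree w = 1))
    (hS : IsSpecialSet G S)
    (D : Finset V) (hD : TGReachable G D) (v : V) (hdeg : 3 ≤ resDeg G D v) :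
    40 ≤ hweight G S D - hweight G S (insert v D) := by
  classical
  -- basic membership facts
  have hmemE : ∀ u, u ∈ resEdges G D ↔ Disjoint (G.neighborFinset u) D := by
    intro u; simp [resEdges]
  have hmemE' : ∀ u, u ∈ resEdges G (insert v D) ↔
      v ∉ G.neighborFinset u ∧ u ∈ resEdges G D := by
    intro u; simp [resEdges, Finset.disjoint_insert_right, and_comm]
  have hE'E : resEdges G (insert v D) ⊆ resEdges G D :=
    fun u hu => ((hmemE' u).1 hu).2
  have hdeg' : 3 ≤ ((resEdges G D).filter fun u => v ∈ G.neighborFinset u).card := hdeg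
  -- at least three edges are removed
  have hdiff : resEdges G D \ resEdges G (insert v D)
      = (resEdges G D).filter (fun u => v ∈ G.neighborFinset u) := by
    ext u
    simp only [Finset.mem_sdiff, Finset.mem_filter, hmemE']
    tauto
  have hcard3 : (resEdges G (insert v D)).card + 3 ≤ (resEdges G D).card := by
    have h1 := Finset.card_sdiff_of_subset hE'E
    have h3 := Finset.card_le_card hE'E
    rw [hdiff] at h1
    omega
  -- v belongs to some residual edge
  have hvE : ∃ u ∈ resEdges G D, v ∈ G.neighborFinset u := by
    have h2 : 0 < ((resEdges G D).filter (fun u => v ∈ G.neighborFinset u)).card := by omega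
    obtain ⟨u, hu⟩ := Finset.card_pos.mp h2
    exact ⟨u, (Finset.mem_filter.mp hu).1, (Finset.mem_filter.mp hu).2⟩
  have hmemA : ∀ D₀ : Finset V, ∀ w,
      w ∈ resVerts G D₀ ↔ ∃ u ∈ resEdges G D₀, w ∈ G.neighborFinset u := by
    intro D₀ w; simp [resVerts]
  have hA'A : resVerts G (insert v D) ⊆ resVerts G D := by
    intro w hw
    obtain ⟨u, hu, hwu⟩ := (hmemA _ w).1 hw
    exact (hmemA _ w).2 ⟨u, hE'E hu, hwu⟩
  have hvA : v ∈ resVerts G D := by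
    obtain ⟨u, hu, hvu⟩ := hvE
    exact (hmemA _ v).2 ⟨u, hu, hvu⟩
  have hvA' : v ∉ resVerts G (insert v D) := by
    intro h
    obtain ⟨u, hu, hvu⟩ := (hmemA _ v).1 h
    exact ((hmemE' u).1 hu).1 hvu
  -- v is not special
  have hvS : v ∉ S := by
    intro hv
    have h1 := hS.1 v hv
    have h2 : ((resEdges G D).filter fun u => v ∈ G.neighborFinset u).card ≤ G.degree v := by
      have hsub : ((resEdges G D).filter fun u => v ∈ G.neighborFinset u)
          ⊆ G.neighborFinset v := by
        intro u hu
        have h := (Finset.mem_filter.mp hu).2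
        rw [SimpleGraph.mem_neighborFinset] at h ⊢
        exact h.symm
      exact Finset.card_le_card hsub
    omega
  -- Type-X edge-sets that survive stay Type-X
  have hXmem : ∀ D₀ : Finset V, ∀ e, e ∈ TXset G S D₀ ↔
      (∃ u ∈ resEdges G D₀, G.neighborFinset u = e) ∧
        (∀ w ∈ e, ∀ u ∈ resEdges G D₀, w ∈ G.neighborFinset u → G.neighborFinset u = e) ∧
          2 ≤ (e \ S).card := by
    intro D₀ e
    simp only [TXset, Finset.mem_filter, Finset.mem_image]
  have hXkey : ∀ e ∈ TXset G S D, (∃ u ∈ resEdges G (insert v D), G.neighborFinset u = e) →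
      e ∈ TXset G S (insert v D) := by
    intro e he hex
    obtain ⟨-, hiso₁, hcard₁⟩ := (hXmem D e).1 he
    exact (hXmem _ e).2 ⟨hex, fun w hw u hu hwu => hiso₁ w hw u (hE'E hu) hwu, hcard₁⟩
  -- common counting facts
  have hbmono : ((resVerts G (insert v D)) ∩ S).card ≤ ((resVerts G D) ∩ S).card :=
    Finset.card_le_card (Finset.inter_subset_inter_right hA'A)
  have hcmono : ((resEdges G (insert v D)) \ S).card ≤ ((resEdges G D) \ S).card :=
    Finset.card_le_card (Finset.sdiff_subset_sdiff hE'E le_rfl)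
  have hdmono : ((resEdges G (insert v D)) ∩ S).card ≤ ((resEdges G D) ∩ S).card :=
    Finset.card_le_card (Finset.inter_subset_inter_right hE'E)
  have hEsplit : ((resEdges G D) \ S).card + ((resEdges G D) ∩ S).card
      = (resEdges G D).card := Finset.card_sdiff_add_card_inter _ _
  have hE'split : ((resEdges G (insert v D)) \ S).card + ((resEdges G (insert v D)) ∩ S).card
      = (resEdges G (insert v D)).card := Finset.card_sdiff_add_card_inter _ _
  have hAsub : (resVerts G (insert v D)) \ S ⊆ (resVerts G D) \ S :=
    Finset.sdiff_subset_sdiff hA'A le_rfl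
  have hvAS : v ∈ (resVerts G D) \ S := Finset.mem_sdiff.mpr ⟨hvA, hvS⟩
  have hvAS' : v ∉ (resVerts G (insert v D)) \ S := fun h => hvA' (Finset.mem_sdiff.mp h).1
  rw [hweight, hweight, numTypeX_eq_TXset, numTypeX_eq_TXset]
  by_cases hcase : TXset G S D ⊆ TXset G S (insert v D)
  · -- no Type-X component is destroyed
    have hx : (TXset G S D).card ≤ (TXset G S (insert v D)).card := Finset.card_le_card hcase
    have ha : ((resVerts G (insert v D)) \ S).card + 1 ≤ ((resVerts G D) \ S).card := by
      have hsub2 : insert v ((resVerts G (insert v D)) \ S) ⊆ (resVerts G D) \ S := by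
        intro z hz
        rcases Finset.mem_insert.mp hz with rfl | hz
        · exact hvAS
        · exact hAsub hz
      have := Finset.card_le_card hsub2
      rwa [Finset.card_insert_of_notMem hvAS'] at this
    push_cast
    omega
  · -- exactly one Type-X component is destroyed; an extra non-special vertex vanishes
    obtain ⟨e₀, he₀, he₀'⟩ := Finset.not_subset.mp hcase
    obtain ⟨⟨u₀, hu₀E, hu₀e⟩, hiso₀, hcard₀⟩ := (hXmem D e₀).1 he₀
    have hnosurv : ¬ ∃ u ∈ resEdges G (insert v D), G.neighborFinset u = e₀ :=
      fun hex => he₀' (hXkey e₀ he₀ hex)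
    have hve₀ : v ∈ e₀ := by
      by_contra hve
      exact hnosurv ⟨u₀, (hmemE' u₀).2 ⟨by rw [hu₀e]; exact hve, hu₀E⟩, hu₀e⟩
    -- pick a second non-special vertex of e₀
    obtain ⟨a, ha, b, hb, hab⟩ := Finset.one_lt_card.mp (by omega : 1 < (e₀ \ S).card)
    have hw : ∃ w, w ∈ e₀ \ S ∧ w ≠ v := by
      by_cases hav : a = v
      · exact ⟨b, hb, by rw [← hav]; exact fun h => hab h.symm⟩
      · exact ⟨a, ha, hav⟩
    obtain ⟨w, hwES, hwv⟩ := hw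
    have hwe₀ : w ∈ e₀ := (Finset.mem_sdiff.mp hwES).1
    have hwS : w ∉ S := (Finset.mem_sdiff.mp hwES).2
    have hwA : w ∈ resVerts G D := (hmemA _ w).2 ⟨u₀, hu₀E, by rw [hu₀e]; exact hwe₀⟩
    have hwA' : w ∉ resVerts G (insert v D) := by
      intro h
      obtain ⟨u', hu', hwu'⟩ := (hmemA _ w).1 h
      have heq := hiso₀ w hwe₀ u' (hE'E hu') hwu'
      exact ((hmemE' u').1 hu').1 (by rw [heq]; exact hve₀)
    have ha2 : ((resVerts G (insert v D)) \ S).card + 2 ≤ ((resVerts G D) \ S).card := by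
      have hwAS' : w ∉ (resVerts G (insert v D)) \ S :=
        fun h => hwA' (Finset.mem_sdiff.mp h).1
      have hsub2 : insert v (insert w ((resVerts G (insert v D)) \ S))
          ⊆ (resVerts G D) \ S := by
        intro z hz
        rcases Finset.mem_insert.mp hz with rfl | hz
        · exact hvAS
        rcases Finset.mem_insert.mp hz with rfl | hz
        · exact Finset.mem_sdiff.mpr ⟨hwA, hwS⟩
        · exact hAsub hz
      have hcc := Finset.card_le_card hsub2
      rw [Finset.card_insert_of_notMem, Finset.card_insert_of_notMem hwAS'] at hcc
      · omega
      · intro h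
        rcases Finset.mem_insert.mp h with h | h
        · exact hwv h.symm
        · exact hvAS' h
    -- at most one Type-X set is destroyed
    have hx : (TXset G S D).card ≤ (TXset G S (insert v D)).card + 1 := by
      have hsub3 : TXset G S D ⊆ insert e₀ (TXset G S (insert v D)) := by
        intro e he
        by_cases hee : e = e₀
        · exact hee ▸ Finset.mem_insert_self _ _
        · refine Finset.mem_insert_of_mem (hXkey e he ?_)
          obtain ⟨⟨u, huE, hue⟩, -, -⟩ := (hXmem D e).1 he
          refine ⟨u, ?_, hue⟩
          rw [hmemE']
          refine ⟨fun hvu => ?_, huE⟩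
          exact hee (hue ▸ (hiso₀ v hve₀ u huE hvu).symm ▸ rfl)
      calc (TXset G S D).card ≤ (insert e₀ (TXset G S (insert v D))).card :=
            Finset.card_le_card hsub3
        _ ≤ (TXset G S (insert v D)).card + 1 := Finset.card_insert_le _ _
    push_cast
    omega
end

section
/- Let H be a residual hypergraph arising from H_0 = ONH(G) with special set S. If H contains a special vertex v and a vertex u sharing an edge with v such that the singleton {u} is a special edge of H, then playing u decreases the weight f by at least 44. -/
/- The open neighborhood hypergraph `ONH(G)` of a finite simple graph `G` has vertex
set `V(G)` and edge multiset `{N_G(v) : v ∈ V(G)}`; we represent its edges as the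
family indexed by the vertices, `u ↦ N_G(u)` (so edges are counted with
multiplicity via their indices). -/

open Finset

variable {V : Type*} [Fintype V] [DecidableEq V]

/-- If the residual hypergraph contains a special vertex `v` and a vertex `u`
sharing an edge with `v` such that the singleton `{u}` is a special edge, then
playing `u` decreases the weight `f` by at least 44. -/
theorem play_singleton_special_edge_decrease (G : SimpleGraph V) [DecidableRel G.Adj] (S : Finset V)
    (hiso : ∀ v : V, 0 < G.degree v)
    (hisoedge : ∀ v w : V, G.Adj v w → ¬(G.degree v = 1 ∧ G.degree w = 1))
    (hS : IsSpecialSet G S)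
    (D : Finset V) (hD : TGReachable G D)
    (v u s : V) (hvS : v ∈ S) (hvH : v ∈ resVerts G D)
    (hsS : s ∈ S) (hsE : s ∈ resEdges G D) (hs : G.neighborFinset s = {u})
    (huv : u ≠ v) (hshare : ShareEdge G D v u) :
    44 ≤ hweight G S D - hweight G S (insert u D) := by

  classical
  obtain ⟨w, hwE, hvw, huw⟩ := hshare
  set D' := insert u D with hD'
  have hus : u ∈ G.neighborFinset s := by rw [hs]; exact Finset.mem_singleton_self u
  have hE'sub : resEdges G D' ⊆ resEdges G D := by
    intro t ht
    simp only [resEdges, Finset.mem_filter, Finset.mem_univ, true_and] at ht ⊢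
    exact ht.mono_right (Finset.subset_insert _ _)
  have hsnotE' : s ∉ resEdges G D' := by
    simp only [resEdges, Finset.mem_filter, Finset.mem_univ, true_and]
    exact fun hdisj => (Finset.disjoint_left.mp hdisj hus) (Finset.mem_insert_self u D)
  have hwnotE' : w ∉ resEdges G D' := by
    simp only [resEdges, Finset.mem_filter, Finset.mem_univ, true_and]
    exact fun hdisj => (Finset.disjoint_left.mp hdisj huw) (Finset.mem_insert_self u D)
  have hws : w ≠ s := by
    intro h
    rw [h, hs] at hvw
    exact huv (Finset.mem_singleton.mp hvw).symm
  have hVsub : resVerts G D' ⊆ resVerts G D := by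
    intro x hx
    simp only [resVerts, Finset.mem_biUnion] at hx ⊢
    obtain ⟨t, htE, hxt⟩ := hx
    exact ⟨t, hE'sub htE, hxt⟩
  have huV : u ∈ resVerts G D := Finset.mem_biUnion.mpr ⟨s, hsE, hus⟩
  have huV' : u ∉ resVerts G D' := by
    intro hx
    obtain ⟨t, htE, hxt⟩ := Finset.mem_biUnion.mp hx
    simp only [resEdges, Finset.mem_filter, Finset.mem_univ, true_and] at htE
    exact (Finset.disjoint_left.mp htE hxt) (Finset.mem_insert_self u D)
  have hdegv : (G.neighborFinset v).card = 1 := by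
    rw [G.card_neighborFinset_eq_degree]; exact hS.1 v hvS
  have hvV' : v ∉ resVerts G D' := by
    intro hx
    obtain ⟨t, htE, hxt⟩ := Finset.mem_biUnion.mp hx
    have h1 : t ∈ G.neighborFinset v := by
      rw [SimpleGraph.mem_neighborFinset] at hxt ⊢; exact hxt.symm
    have h2 : w ∈ G.neighborFinset v := by
      rw [SimpleGraph.mem_neighborFinset] at hvw ⊢; exact hvw.symm
    have htw : t = w := Finset.card_le_one.mp hdegv.le t h1 w h2
    exact hwnotE' (htw ▸ htE)
  have huS : u ∉ S := by
    intro huS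
    have hadj : G.Adj s u := by rwa [SimpleGraph.mem_neighborFinset] at hus
    exact hisoedge s u hadj ⟨hS.1 s hsS, hS.1 u huS⟩
  have hX : numTypeX G S D ≤ numTypeX G S D' := by
    unfold numTypeX
    apply Finset.card_le_card
    intro e he
    simp only [Finset.mem_filter, Finset.mem_image] at he ⊢
    obtain ⟨⟨t0, ht0E, ht0e⟩, hisoC, hcard⟩ := he
    have hue : u ∉ e := by
      intro hue
      have heq := hisoC u hue s hsE hus
      rw [hs] at heq
      rw [← heq] at hcard
      have hle : ({u} \ S).card ≤ 1 :=
        (Finset.card_le_card Finset.sdiff_subset).trans (by simp)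
      omega
    refine ⟨⟨t0, ?_, ht0e⟩, ?_, hcard⟩
    · simp only [resEdges, Finset.mem_filter, Finset.mem_univ, true_and] at ht0E ⊢
      rw [hD', Finset.disjoint_insert_right]
      exact ⟨by rw [ht0e]; exact hue, ht0E⟩
    · intro x hx t1 ht1 hxt1
      exact hisoC x hx t1 (hE'sub ht1) hxt1
  -- vertex cardinalities
  have hcardA : (resVerts G D' \ S).card + 1 ≤ (resVerts G D \ S).card := by
    have hsub : insert u (resVerts G D' \ S) ⊆ resVerts G D \ S := by
      intro x hx
      rcases Finset.mem_insert.mp hx with h | h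
      · subst h; exact Finset.mem_sdiff.mpr ⟨huV, huS⟩
      · rcases Finset.mem_sdiff.mp h with ⟨h1, h2⟩
        exact Finset.mem_sdiff.mpr ⟨hVsub h1, h2⟩
    have hnm : u ∉ resVerts G D' \ S := fun h => huV' (Finset.mem_sdiff.mp h).1
    calc (resVerts G D' \ S).card + 1 = (insert u (resVerts G D' \ S)).card :=
          (Finset.card_insert_of_notMem hnm).symm
      _ ≤ _ := Finset.card_le_card hsub
  have hcardB : (resVerts G D' ∩ S).card + 1 ≤ (resVerts G D ∩ S).card := by
    have hsub : insert v (resVerts G D' ∩ S) ⊆ resVerts G D ∩ S := by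
      intro x hx
      rcases Finset.mem_insert.mp hx with h | h
      · subst h; exact Finset.mem_inter.mpr ⟨hvH, hvS⟩
      · rcases Finset.mem_inter.mp h with ⟨h1, h2⟩
        exact Finset.mem_inter.mpr ⟨hVsub h1, h2⟩
    have hnm : v ∉ resVerts G D' ∩ S := fun h => hvV' (Finset.mem_inter.mp h).1
    calc (resVerts G D' ∩ S).card + 1 = (insert v (resVerts G D' ∩ S)).card :=
          (Finset.card_insert_of_notMem hnm).symm
      _ ≤ _ := Finset.card_le_card hsub
  have hcardC0 : (resEdges G D' \ S).card ≤ (resEdges G D \ S).card := by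
    apply Finset.card_le_card
    intro x hx
    rcases Finset.mem_sdiff.mp hx with ⟨h1, h2⟩
    exact Finset.mem_sdiff.mpr ⟨hE'sub h1, h2⟩
  have hcardD1 : (resEdges G D' ∩ S).card + 1 ≤ (resEdges G D ∩ S).card := by
    have hsub : insert s (resEdges G D' ∩ S) ⊆ resEdges G D ∩ S := by
      intro x hx
      rcases Finset.mem_insert.mp hx with h | h
      · subst h; exact Finset.mem_inter.mpr ⟨hsE, hsS⟩
      · rcases Finset.mem_inter.mp h with ⟨h1, h2⟩
        exact Finset.mem_inter.mpr ⟨hE'sub h1, h2⟩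
    have hnm : s ∉ resEdges G D' ∩ S := fun h => hsnotE' (Finset.mem_inter.mp h).1
    calc (resEdges G D' ∩ S).card + 1 = (insert s (resEdges G D' ∩ S)).card :=
          (Finset.card_insert_of_notMem hnm).symm
      _ ≤ _ := Finset.card_le_card hsub
  rcases em (w ∈ S) with hwS | hwS
  · have hcardD2 : (resEdges G D' ∩ S).card + 2 ≤ (resEdges G D ∩ S).card := by
      have hsub : insert w (insert s (resEdges G D' ∩ S)) ⊆ resEdges G D ∩ S := by
        intro x hx
        rcases Finset.mem_insert.mp hx with h | h
        · subst h; exact Finset.mem_inter.mpr ⟨hwE, hwS⟩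
        rcases Finset.mem_insert.mp h with h | h
        · subst h; exact Finset.mem_inter.mpr ⟨hsE, hsS⟩
        · rcases Finset.mem_inter.mp h with ⟨h1, h2⟩
          exact Finset.mem_inter.mpr ⟨hE'sub h1, h2⟩
      have hnm1 : s ∉ resEdges G D' ∩ S := fun h => hsnotE' (Finset.mem_inter.mp h).1
      have hnm2 : w ∉ insert s (resEdges G D' ∩ S) := by
        intro h
        rcases Finset.mem_insert.mp h with h | h
        · exact hws h
        · exact hwnotE' (Finset.mem_inter.mp h).1
      calc (resEdges G D' ∩ S).card + 2
          = (insert w (insert s (resEdges G D' ∩ S))).card := by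
            rw [Finset.card_insert_of_notMem hnm2, Finset.card_insert_of_notMem hnm1]
        _ ≤ _ := Finset.card_le_card hsub
    unfold hweight
    omega
  · have hcardC1 : (resEdges G D' \ S).card + 1 ≤ (resEdges G D \ S).card := by
      have hsub : insert w (resEdges G D' \ S) ⊆ resEdges G D \ S := by
        intro x hx
        rcases Finset.mem_insert.mp hx with h | h
        · subst h; exact Finset.mem_sdiff.mpr ⟨hwE, hwS⟩
        · rcases Finset.mem_sdiff.mp h with ⟨h1, h2⟩
          exact Finset.mem_sdiff.mpr ⟨hE'sub h1, h2⟩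
      have hnm : w ∉ resEdges G D' \ S := fun h => hwnotE' (Finset.mem_sdiff.mp h).1
      calc (resEdges G D' \ S).card + 1 = (insert w (resEdges G D' \ S)).card :=
            (Finset.card_insert_of_notMem hnm).symm
        _ ≤ _ := Finset.card_le_card hsub
    unfold hweight
    omega
end

section
/- Let H be a residual hypergraph arising from H_0 = ONH(G) with special set S. If v ∈ V(H) has degree exactly 2 in H and the set of vertices sharing an edge with v contains two distinct special vertices, then playing v decreases the weight f by at least 45. -/
/- The open neighborhood hypergraph `ONH(G)` of a finite simple graph `G` has vertex
set `V(G)` and edge multiset `{N_G(v) : v ∈ V(G)}`; we represent its edges as the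
family indexed by the vertices, `u ↦ N_G(u)` (so edges are counted with
multiplicity via their indices). -/

open Finset

variable {V : Type*} [Fintype V] [DecidableEq V]

/-- If `v` has degree exactly 2 in the residual hypergraph and has two distinct
special neighbors (vertices sharing an edge with `v`), then playing `v` decreases
the weight `f` by at least 45. -/
theorem play_two_special_neighbors_decrease (G : SimpleGraph V) [DecidableRel G.Adj] (S : Finset V)
    (hiso : ∀ v : V, 0 < G.degree v)
    (hisoedge : ∀ v w : V, G.Adj v w → ¬(G.degree v = 1 ∧ G.degree w = 1))
    (hS : IsSpecialSet G S)
    (D : Finset V) (hD : TGReachable G D)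
    (v u₁ u₂ : V) (hdeg : resDeg G D v = 2)
    (hu₁S : u₁ ∈ S) (hu₂S : u₂ ∈ S) (hne : u₁ ≠ u₂) (h₁v : u₁ ≠ v) (h₂v : u₂ ≠ v)
    (hs₁ : ShareEdge G D v u₁) (hs₂ : ShareEdge G D v u₂) :
    45 ≤ hweight G S D - hweight G S (insert v D) := by
  classical
  obtain ⟨hS1, hS2⟩ := hS
  obtain ⟨w₁, hw₁E, hvw₁, hu₁w₁⟩ := hs₁
  obtain ⟨w₂, hw₂E, hvw₂, hu₂w₂⟩ := hs₂
  have hd₁ : G.degree u₁ = 1 := hS1 u₁ hu₁S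
  have hd₂ : G.degree u₂ = 1 := hS1 u₂ hu₂S
  -- neighborhoods of the special vertices are singletons
  have hN₁ : G.neighborFinset u₁ = {w₁} := by
    obtain ⟨a, ha⟩ := Finset.card_eq_one.mp
      ((SimpleGraph.card_neighborFinset_eq_degree G u₁).trans hd₁)
    have hw : w₁ ∈ G.neighborFinset u₁ := by
      rw [SimpleGraph.mem_neighborFinset] at hu₁w₁ ⊢; exact hu₁w₁.symm
    rw [ha] at hw ⊢
    rw [Finset.mem_singleton] at hw
    rw [hw]
  have hN₂ : G.neighborFinset u₂ = {w₂} := by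
    obtain ⟨a, ha⟩ := Finset.card_eq_one.mp
      ((SimpleGraph.card_neighborFinset_eq_degree G u₂).trans hd₂)
    have hw : w₂ ∈ G.neighborFinset u₂ := by
      rw [SimpleGraph.mem_neighborFinset] at hu₂w₂ ⊢; exact hu₂w₂.symm
    rw [ha] at hw ⊢
    rw [Finset.mem_singleton] at hw
    rw [hw]
  -- w₁ ≠ w₂
  have hw12 : w₁ ≠ w₂ := by
    intro h
    subst h
    obtain ⟨x, -, hxuniq⟩ := hS2 w₁ ⟨u₁, hu₁w₁, hd₁⟩
    exact hne ((hxuniq u₁ ⟨hu₁S, hu₁w₁⟩).trans (hxuniq u₂ ⟨hu₂S, hu₂w₂⟩).symm)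
  -- the two residual edges containing v are exactly w₁, w₂
  have hW : ((resEdges G D).filter fun u => v ∈ G.neighborFinset u) = {w₁, w₂} := by
    refine (Finset.eq_of_subset_of_card_le ?_ ?_).symm
    · intro x hx
      rw [Finset.mem_insert, Finset.mem_singleton] at hx
      rcases hx with h | h <;> subst h <;> rw [Finset.mem_filter]
      · exact ⟨hw₁E, hvw₁⟩
      · exact ⟨hw₂E, hvw₂⟩
    · rw [Finset.card_pair hw12]
      exact le_of_eq hdeg
  have hWmem : ∀ u ∈ resEdges G D, v ∈ G.neighborFinset u → u = w₁ ∨ u = w₂ := by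
    intro u hu hvu
    have : u ∈ ((resEdges G D).filter fun u => v ∈ G.neighborFinset u) :=
      Finset.mem_filter.mpr ⟨hu, hvu⟩
    rw [hW, Finset.mem_insert, Finset.mem_singleton] at this
    exact this
  -- w₁, w₂ are not special
  have hw₁S : w₁ ∉ S := by
    intro h
    have hcard : (G.neighborFinset w₁).card = 1 :=
      (SimpleGraph.card_neighborFinset_eq_degree G w₁).trans (hS1 w₁ h)
    obtain ⟨a, ha⟩ := Finset.card_eq_one.mp hcard
    rw [ha, Finset.mem_singleton] at hvw₁ hu₁w₁
    exact h₁v (hu₁w₁.trans hvw₁.symm)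
  have hw₂S : w₂ ∉ S := by
    intro h
    have hcard : (G.neighborFinset w₂).card = 1 :=
      (SimpleGraph.card_neighborFinset_eq_degree G w₂).trans (hS1 w₂ h)
    obtain ⟨a, ha⟩ := Finset.card_eq_one.mp hcard
    rw [ha, Finset.mem_singleton] at hvw₂ hu₂w₂
    exact h₂v (hu₂w₂.trans hvw₂.symm)
  -- v is not special
  have hvS : v ∉ S := by
    intro h
    have hcard : (G.neighborFinset v).card = 1 :=
      (SimpleGraph.card_neighborFinset_eq_degree G v).trans (hS1 v h)
    obtain ⟨a, ha⟩ := Finset.card_eq_one.mp hcard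
    have h1 : w₁ ∈ G.neighborFinset v := by
      rw [SimpleGraph.mem_neighborFinset] at hvw₁ ⊢; exact hvw₁.symm
    have h2 : w₂ ∈ G.neighborFinset v := by
      rw [SimpleGraph.mem_neighborFinset] at hvw₂ ⊢; exact hvw₂.symm
    rw [ha, Finset.mem_singleton] at h1 h2
    exact hw12 (h1.trans h2.symm)
  -- description of the new residual edge set
  have hE'mem : ∀ u : V, u ∈ resEdges G (insert v D) ↔
      u ∈ resEdges G D ∧ v ∉ G.neighborFinset u := by
    intro u
    simp only [resEdges, Finset.mem_filter, Finset.mem_univ, true_and,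
      Finset.disjoint_insert_right]
    tauto
  have hE'sub : resEdges G (insert v D) ⊆ resEdges G D := fun u hu => ((hE'mem u).mp hu).1
  have hw₁E' : w₁ ∉ resEdges G (insert v D) := fun h => ((hE'mem w₁).mp h).2 hvw₁
  have hw₂E' : w₂ ∉ resEdges G (insert v D) := fun h => ((hE'mem w₂).mp h).2 hvw₂
  -- vertex sets
  have hVsub : resVerts G (insert v D) ⊆ resVerts G D := by
    intro x hx
    rw [resVerts, Finset.mem_biUnion] at hx ⊢
    obtain ⟨u, hu, hxu⟩ := hx
    exact ⟨u, hE'sub hu, hxu⟩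
  have hvVt : v ∈ resVerts G D := by
    rw [resVerts, Finset.mem_biUnion]; exact ⟨w₁, hw₁E, hvw₁⟩
  have hu₁Vt : u₁ ∈ resVerts G D := by
    rw [resVerts, Finset.mem_biUnion]; exact ⟨w₁, hw₁E, hu₁w₁⟩
  have hu₂Vt : u₂ ∈ resVerts G D := by
    rw [resVerts, Finset.mem_biUnion]; exact ⟨w₂, hw₂E, hu₂w₂⟩
  have hvVt' : v ∉ resVerts G (insert v D) := by
    intro hx
    rw [resVerts, Finset.mem_biUnion] at hx
    obtain ⟨u, hu, hxu⟩ := hx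
    exact ((hE'mem u).mp hu).2 hxu
  have hu₁Vt' : u₁ ∉ resVerts G (insert v D) := by
    intro hx
    rw [resVerts, Finset.mem_biUnion] at hx
    obtain ⟨u, hu, hxu⟩ := hx
    rw [SimpleGraph.mem_neighborFinset] at hxu
    have : u ∈ G.neighborFinset u₁ := by
      rw [SimpleGraph.mem_neighborFinset]; exact hxu.symm
    rw [hN₁, Finset.mem_singleton] at this
    exact hw₁E' (this ▸ hu)
  have hu₂Vt' : u₂ ∉ resVerts G (insert v D) := by
    intro hx
    rw [resVerts, Finset.mem_biUnion] at hx
    obtain ⟨u, hu, hxu⟩ := hx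
    rw [SimpleGraph.mem_neighborFinset] at hxu
    have : u ∈ G.neighborFinset u₂ := by
      rw [SimpleGraph.mem_neighborFinset]; exact hxu.symm
    rw [hN₂, Finset.mem_singleton] at this
    exact hw₂E' (this ▸ hu)
  -- special vertices count: B' + 2 ≤ B
  have hB : (resVerts G (insert v D) ∩ S).card + 2 ≤ (resVerts G D ∩ S).card := by
    have hsub : insert u₁ (insert u₂ (resVerts G (insert v D) ∩ S)) ⊆ resVerts G D ∩ S := by
      intro x hx
      rw [Finset.mem_insert, Finset.mem_insert] at hx
      rcases hx with h | h | h
      · subst h; exact Finset.mem_inter.mpr ⟨hu₁Vt, hu₁S⟩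
      · subst h; exact Finset.mem_inter.mpr ⟨hu₂Vt, hu₂S⟩
      · exact Finset.mem_inter.mpr ⟨hVsub (Finset.mem_inter.mp h).1, (Finset.mem_inter.mp h).2⟩
    have h1 : u₂ ∉ resVerts G (insert v D) ∩ S := fun h => hu₂Vt' (Finset.mem_inter.mp h).1
    have h2 : u₁ ∉ insert u₂ (resVerts G (insert v D) ∩ S) := by
      rw [Finset.mem_insert]
      rintro (h | h)
      · exact hne h
      · exact hu₁Vt' (Finset.mem_inter.mp h).1
    calc (resVerts G (insert v D) ∩ S).card + 2
        = (insert u₁ (insert u₂ (resVerts G (insert v D) ∩ S))).card := by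
          rw [Finset.card_insert_of_notMem h2, Finset.card_insert_of_notMem h1]
      _ ≤ (resVerts G D ∩ S).card := Finset.card_le_card hsub
  -- edge counts
  have hC : (resEdges G D \ S).card = (resEdges G (insert v D) \ S).card + 2 := by
    have heq : resEdges G D \ S = insert w₁ (insert w₂ (resEdges G (insert v D) \ S)) := by
      ext x
      rw [Finset.mem_insert, Finset.mem_insert, Finset.mem_sdiff, Finset.mem_sdiff, hE'mem]
      constructor
      · rintro ⟨hxE, hxS⟩
        by_cases hvx : v ∈ G.neighborFinset x
        · rcases hWmem x hxE hvx with h | h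
          · exact Or.inl h
          · exact Or.inr (Or.inl h)
        · exact Or.inr (Or.inr ⟨⟨hxE, hvx⟩, hxS⟩)
      · rintro (h | h | ⟨⟨h1, _⟩, h2⟩)
        · subst h; exact ⟨hw₁E, hw₁S⟩
        · subst h; exact ⟨hw₂E, hw₂S⟩
        · exact ⟨h1, h2⟩
    have h1 : w₂ ∉ resEdges G (insert v D) \ S := fun h => hw₂E' (Finset.mem_sdiff.mp h).1
    have h2 : w₁ ∉ insert w₂ (resEdges G (insert v D) \ S) := by
      rw [Finset.mem_insert]
      rintro (h | h)
      · exact hw12 h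
      · exact hw₁E' (Finset.mem_sdiff.mp h).1
    rw [heq, Finset.card_insert_of_notMem h2, Finset.card_insert_of_notMem h1]
  have hDd : resEdges G D ∩ S = resEdges G (insert v D) ∩ S := by
    ext x
    rw [Finset.mem_inter, Finset.mem_inter, hE'mem]
    constructor
    · rintro ⟨hxE, hxS⟩
      refine ⟨⟨hxE, fun hvx => ?_⟩, hxS⟩
      rcases hWmem x hxE hvx with h | h
      · exact hw₁S (h ▸ hxS)
      · exact hw₂S (h ▸ hxS)
    · rintro ⟨⟨h1, _⟩, h2⟩
      exact ⟨h1, h2⟩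
  -- Type-X preservation for edges not containing v
  have hXpres : ∀ e : Finset V,
      e ∈ (((resEdges G D).image fun u => G.neighborFinset u).filter fun e =>
        (∀ w ∈ e, ∀ u ∈ resEdges G D, w ∈ G.neighborFinset u → G.neighborFinset u = e) ∧
          2 ≤ (e \ S).card) → v ∉ e →
      e ∈ (((resEdges G (insert v D)).image fun u => G.neighborFinset u).filter fun e =>
        (∀ w ∈ e, ∀ u ∈ resEdges G (insert v D), w ∈ G.neighborFinset u →
          G.neighborFinset u = e) ∧ 2 ≤ (e \ S).card) := by
    intro e he hve
    rw [Finset.mem_filter, Finset.mem_image] at he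
    obtain ⟨⟨p, hpE, hpe⟩, hiso', hcard'⟩ := he
    rw [Finset.mem_filter, Finset.mem_image]
    refine ⟨⟨p, ?_, hpe⟩, fun w hw u hu hwu => hiso' w hw u (hE'sub hu) hwu, hcard'⟩
    rw [hE'mem]
    exact ⟨hpE, fun hvp => hve (hpe ▸ hvp)⟩
  -- the main case distinction
  by_cases hX : ∃ e ∈ (((resEdges G D).image fun u => G.neighborFinset u).filter fun e =>
      (∀ w ∈ e, ∀ u ∈ resEdges G D, w ∈ G.neighborFinset u → G.neighborFinset u = e) ∧
        2 ≤ (e \ S).card), v ∈ e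
  · -- Case 1 : v lies in a Type-X component e
    obtain ⟨e, heX, hve⟩ := hX
    have heX' := heX
    rw [Finset.mem_filter, Finset.mem_image] at heX'
    obtain ⟨⟨p, hpE, hpe⟩, hisoe, hcarde⟩ := heX'
    -- every edge containing v equals e; in particular N w₁ = e
    have hNw₁ : G.neighborFinset w₁ = e := hisoe v hve w₁ hw₁E hvw₁
    have hNw₂ : G.neighborFinset w₂ = e := hisoe v hve w₂ hw₂E hvw₂
    have hu₁e : u₁ ∈ e := hNw₁ ▸ hu₁w₁
    have hu₂e : u₂ ∈ e := hNw₂ ▸ hu₂w₂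
    have heVt : e ⊆ resVerts G D := by
      intro q hq
      rw [resVerts, Finset.mem_biUnion]
      exact ⟨w₁, hw₁E, hNw₁ ▸ hq⟩
    have heVt' : ∀ q ∈ e, q ∉ resVerts G (insert v D) := by
      intro q hq hq'
      rw [resVerts, Finset.mem_biUnion] at hq'
      obtain ⟨u, hu, hqu⟩ := hq'
      have := hisoe q hq u (hE'sub hu) hqu
      exact ((hE'mem u).mp hu).2 (this ▸ hve)
    -- non-special vertices: A' + 2 ≤ A
    have hA : (resVerts G (insert v D) \ S).card + 2 ≤ (resVerts G D \ S).card := by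
      have hdisj : Disjoint (resVerts G (insert v D) \ S) (e \ S) := by
        rw [Finset.disjoint_left]
        intro x hx hx'
        exact heVt' x (Finset.mem_sdiff.mp hx').1 (Finset.mem_sdiff.mp hx).1
      have hsub : (resVerts G (insert v D) \ S) ∪ (e \ S) ⊆ resVerts G D \ S := by
        intro x hx
        rw [Finset.mem_union] at hx
        rcases hx with h | h
        · exact Finset.mem_sdiff.mpr ⟨hVsub (Finset.mem_sdiff.mp h).1, (Finset.mem_sdiff.mp h).2⟩
        · exact Finset.mem_sdiff.mpr ⟨heVt (Finset.mem_sdiff.mp h).1, (Finset.mem_sdiff.mp h).2⟩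
      calc (resVerts G (insert v D) \ S).card + 2
          ≤ (resVerts G (insert v D) \ S).card + (e \ S).card := by omega
        _ = ((resVerts G (insert v D) \ S) ∪ (e \ S)).card :=
            (Finset.card_union_of_disjoint hdisj).symm
        _ ≤ (resVerts G D \ S).card := Finset.card_le_card hsub
    -- x ≤ x' + 1
    have hx : numTypeX G S D ≤ numTypeX G S (insert v D) + 1 := by
      rw [numTypeX, numTypeX]
      have hsub : (((resEdges G D).image fun u => G.neighborFinset u).filter fun e =>
          (∀ w ∈ e, ∀ u ∈ resEdges G D, w ∈ G.neighborFinset u → G.neighborFinset u = e) ∧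
            2 ≤ (e \ S).card) ⊆
          insert e (((resEdges G (insert v D)).image fun u => G.neighborFinset u).filter fun e =>
          (∀ w ∈ e, ∀ u ∈ resEdges G (insert v D), w ∈ G.neighborFinset u →
            G.neighborFinset u = e) ∧ 2 ≤ (e \ S).card) := by
        intro e₂ he₂
        by_cases hve₂ : v ∈ e₂
        · -- e₂ = e
          have he₂' := he₂
          rw [Finset.mem_filter, Finset.mem_image] at he₂'
          obtain ⟨⟨p₂, hp₂E, hp₂e⟩, -, -⟩ := he₂'
          have hvp₂ : v ∈ G.neighborFinset p₂ := hp₂e ▸ hve₂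
          rcases hWmem p₂ hp₂E hvp₂ with h | h
          · rw [Finset.mem_insert]; left; rw [← hp₂e, h, hNw₁]
          · rw [Finset.mem_insert]; left; rw [← hp₂e, h, hNw₂]
        · exact Finset.mem_insert.mpr (Or.inr (hXpres e₂ he₂ hve₂))
      calc (((resEdges G D).image fun u => G.neighborFinset u).filter fun e =>
          (∀ w ∈ e, ∀ u ∈ resEdges G D, w ∈ G.neighborFinset u → G.neighborFinset u = e) ∧
            2 ≤ (e \ S).card).card
          ≤ (insert e (((resEdges G (insert v D)).image fun u => G.neighborFinset u).filter
              fun e => (∀ w ∈ e, ∀ u ∈ resEdges G (insert v D), w ∈ G.neighborFinset u →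
                G.neighborFinset u = e) ∧ 2 ≤ (e \ S).card)).card :=
            Finset.card_le_card hsub
        _ ≤ _ + 1 := Finset.card_insert_le _ _
    -- conclude
    rw [hweight, hweight, hDd]
    have hA' := hA
    have hB' := hB
    have hC' := hC
    have hx' := hx
    push_cast
    zify at hA' hB' hC' hx'
    linarith
  · -- Case 2 : no Type-X component contains v
    push_neg at hX
    have hA : (resVerts G (insert v D) \ S).card + 1 ≤ (resVerts G D \ S).card := by
      have hsub : insert v (resVerts G (insert v D) \ S) ⊆ resVerts G D \ S := by
        intro x hx
        rw [Finset.mem_insert] at hx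
        rcases hx with h | h
        · subst h; exact Finset.mem_sdiff.mpr ⟨hvVt, hvS⟩
        · exact Finset.mem_sdiff.mpr ⟨hVsub (Finset.mem_sdiff.mp h).1, (Finset.mem_sdiff.mp h).2⟩
      have h1 : v ∉ resVerts G (insert v D) \ S := fun h => hvVt' (Finset.mem_sdiff.mp h).1
      calc (resVerts G (insert v D) \ S).card + 1
          = (insert v (resVerts G (insert v D) \ S)).card :=
            (Finset.card_insert_of_notMem h1).symm
        _ ≤ (resVerts G D \ S).card := Finset.card_le_card hsub
    have hx : numTypeX G S D ≤ numTypeX G S (insert v D) := by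
      rw [numTypeX, numTypeX]
      exact Finset.card_le_card fun e he => hXpres e he (hX e he)
    rw [hweight, hweight, hDd]
    have hA' := hA
    have hB' := hB
    have hC' := hC
    have hx' := hx
    push_cast
    zify at hA' hB' hC' hx'
    linarith
end

section
/- Let H be a residual hypergraph arising from H_0 = ONH(G) with special set S. If H contains a special vertex v and a vertex u of degree exactly 2 in H sharing an edge with v, then playing u decreases the weight f by at least 38. -/
/- The open neighborhood hypergraph `ONH(G)` of a finite simple graph `G` has vertex
set `V(G)` and edge multiset `{N_G(v) : v ∈ V(G)}`; we represent its edges as the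
family indexed by the vertices, `u ↦ N_G(u)` (so edges are counted with
multiplicity via their indices). -/

open Finset

variable {V : Type*} [Fintype V] [DecidableEq V]

/-- If the residual hypergraph contains a special vertex `v` and a vertex `u` of
degree exactly 2 sharing an edge with `v`, then playing `u` decreases the weight
`f` by at least 38. -/
theorem play_degree_two_neighbor_of_special_decrease (G : SimpleGraph V) [DecidableRel G.Adj] (S : Finset V)
    (hiso : ∀ v : V, 0 < G.degree v)
    (hisoedge : ∀ v w : V, G.Adj v w → ¬(G.degree v = 1 ∧ G.degree w = 1))
    (hS : IsSpecialSet G S)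
    (D : Finset V) (hD : TGReachable G D)
    (v u : V) (hvS : v ∈ S) (hvH : v ∈ resVerts G D)
    (hdeg : resDeg G D u = 2) (huv : u ≠ v) (hshare : ShareEdge G D v u) :
    38 ≤ hweight G S D - hweight G S (insert u D) := by
  classical
  obtain ⟨hS1, _hS2⟩ := hS
  have hdegv : G.degree v = 1 := hS1 v hvS
  have hcardNv : (G.neighborFinset v).card = 1 := by
    rw [G.card_neighborFinset_eq_degree]; exact hdegv
  obtain ⟨w₀, hw₀E, hvw₀, huw₀⟩ := hshare
  -- uniqueness of v's neighbor
  have huniq : ∀ y : V, v ∈ G.neighborFinset y → y = w₀ := by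
    intro y hy
    have hy' : y ∈ G.neighborFinset v := by
      rw [SimpleGraph.mem_neighborFinset] at hy ⊢; exact hy.symm
    have hw' : w₀ ∈ G.neighborFinset v := by
      rw [SimpleGraph.mem_neighborFinset] at hvw₀ ⊢
      exact hvw₀.symm
    obtain ⟨a, ha⟩ := Finset.card_eq_one.mp hcardNv
    rw [ha, Finset.mem_singleton] at hy' hw'
    rw [hy', hw']
  -- the second edge z through u
  have hw₀f : w₀ ∈ (resEdges G D).filter fun t => u ∈ G.neighborFinset t :=
    Finset.mem_filter.mpr ⟨hw₀E, huw₀⟩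
  unfold resDeg at hdeg
  obtain ⟨a, b, hab, hset⟩ := Finset.card_eq_two.mp hdeg
  have hw₀ab : w₀ = a ∨ w₀ = b := by
    have h := hw₀f
    rw [hset, Finset.mem_insert, Finset.mem_singleton] at h
    exact h
  obtain ⟨z, hzw, hfeq⟩ : ∃ z, z ≠ w₀ ∧
      ((resEdges G D).filter fun t => u ∈ G.neighborFinset t) = {w₀, z} := by
    rcases hw₀ab with h | h
    · exact ⟨b, by rw [h]; exact hab.symm, by rw [hset, h]⟩
    · exact ⟨a, by rw [h]; exact hab, by rw [hset, h, Finset.pair_comm]⟩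
  have hzf : z ∈ (resEdges G D).filter fun t => u ∈ G.neighborFinset t := by
    rw [hfeq]; exact Finset.mem_insert_of_mem (Finset.mem_singleton_self z)
  have hzE : z ∈ resEdges G D := (Finset.mem_filter.mp hzf).1
  have huz : u ∈ G.neighborFinset z := (Finset.mem_filter.mp hzf).2
  -- u is not special
  have huS : u ∉ S := by
    intro huS
    have hc : (G.neighborFinset u).card = 1 := by
      rw [G.card_neighborFinset_eq_degree]; exact hS1 u huS
    obtain ⟨a', ha'⟩ := Finset.card_eq_one.mp hc
    have h1 : w₀ ∈ G.neighborFinset u := by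
      rw [SimpleGraph.mem_neighborFinset] at huw₀ ⊢; exact huw₀.symm
    have h2 : z ∈ G.neighborFinset u := by
      rw [SimpleGraph.mem_neighborFinset] at huz ⊢; exact huz.symm
    rw [ha', Finset.mem_singleton] at h1 h2
    exact hzw (h2.trans h1.symm)
  -- w₀ is not special
  have hw₀S : w₀ ∉ S := by
    intro hw₀S
    have hadj : G.Adj v w₀ := by
      rw [SimpleGraph.mem_neighborFinset] at hvw₀; exact hvw₀.symm
    exact hisoedge v w₀ hadj ⟨hdegv, hS1 w₀ hw₀S⟩
  -- residual edges after playing u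
  have hE' : ∀ y : V, y ∈ resEdges G (insert u D) ↔
      (y ∈ resEdges G D ∧ u ∉ G.neighborFinset y) := by
    intro y
    simp only [resEdges, Finset.mem_filter, Finset.mem_univ, true_and,
      Finset.disjoint_insert_right]
    tauto
  have hEsub : resEdges G (insert u D) ⊆ resEdges G D := fun y hy => ((hE' y).mp hy).1
  have hVmem : ∀ x : V, x ∈ resVerts G D ↔
      ∃ y ∈ resEdges G D, x ∈ G.neighborFinset y := by
    intro x; simp [resVerts, Finset.mem_biUnion]
  have hVmem' : ∀ x : V, x ∈ resVerts G (insert u D) ↔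
      ∃ y ∈ resEdges G (insert u D), x ∈ G.neighborFinset y := by
    intro x; simp [resVerts, Finset.mem_biUnion]
  have hVsub : resVerts G (insert u D) ⊆ resVerts G D := by
    intro x hx
    obtain ⟨y, hy, hxy⟩ := (hVmem' x).mp hx
    exact (hVmem x).mpr ⟨y, hEsub hy, hxy⟩
  -- u and v leave the vertex set
  have huV : u ∈ resVerts G D := (hVmem u).mpr ⟨w₀, hw₀E, huw₀⟩
  have huV' : u ∉ resVerts G (insert u D) := by
    intro hx
    obtain ⟨y, hy, hxy⟩ := (hVmem' u).mp hx
    exact ((hE' y).mp hy).2 hxy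
  have hvV' : v ∉ resVerts G (insert u D) := by
    intro hx
    obtain ⟨y, hy, hxy⟩ := (hVmem' v).mp hx
    have := huniq y hxy
    subst this
    exact ((hE' y).mp hy).2 huw₀
  -- w₀ and z leave the edge set
  have hw₀E' : w₀ ∉ resEdges G (insert u D) := fun h => ((hE' w₀).mp h).2 huw₀
  have hzE' : z ∉ resEdges G (insert u D) := fun h => ((hE' z).mp h).2 huz
  -- vertex cardinality bounds
  have hA : (resVerts G (insert u D) \ S).card + 1 ≤ (resVerts G D \ S).card := by
    have hsub : resVerts G (insert u D) \ S ⊆ resVerts G D \ S :=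
      Finset.sdiff_subset_sdiff hVsub (Finset.Subset.refl S)
    exact Finset.card_lt_card ((Finset.ssubset_iff_of_subset hsub).mpr
      ⟨u, Finset.mem_sdiff.mpr ⟨huV, huS⟩, fun h => huV' (Finset.mem_sdiff.mp h).1⟩)
  have hB : (resVerts G (insert u D) ∩ S).card + 1 ≤ (resVerts G D ∩ S).card := by
    have hsub : resVerts G (insert u D) ∩ S ⊆ resVerts G D ∩ S :=
      Finset.inter_subset_inter hVsub (Finset.Subset.refl S)
    exact Finset.card_lt_card ((Finset.ssubset_iff_of_subset hsub).mpr
      ⟨v, Finset.mem_inter.mpr ⟨hvH, hvS⟩, fun h => hvV' (Finset.mem_inter.mp h).1⟩)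
  -- Type-X components do not decrease
  have hx : numTypeX G S D ≤ numTypeX G S (insert u D) := by
    unfold numTypeX
    apply Finset.card_le_card
    intro e he
    simp only [Finset.mem_filter, Finset.mem_image] at he ⊢
    obtain ⟨⟨y, hyE, hye⟩, hisoe, hcard⟩ := he
    have hue : u ∉ e := by
      intro hue
      have h1 : G.neighborFinset w₀ = e := hisoe u hue w₀ hw₀E huw₀
      have h2 : G.neighborFinset z = e := hisoe u hue z hzE huz
      have hvz : v ∈ G.neighborFinset z := by rw [h2, ← h1]; exact hvw₀
      exact hzw (huniq z hvz)
    refine ⟨⟨y, (hE' y).mpr ⟨hyE, fun h => hue (hye ▸ h)⟩, hye⟩, ?_, hcard⟩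
    intro w hw t htE hwt
    exact hisoe w hw t (hEsub htE) hwt
  -- edge cardinality bounds, by cases on whether z is special
  by_cases hzS : z ∈ S
  · have hC : (resEdges G (insert u D) \ S).card + 1 ≤ (resEdges G D \ S).card := by
      have hsub : resEdges G (insert u D) \ S ⊆ resEdges G D \ S :=
        Finset.sdiff_subset_sdiff hEsub (Finset.Subset.refl S)
      exact Finset.card_lt_card ((Finset.ssubset_iff_of_subset hsub).mpr
        ⟨w₀, Finset.mem_sdiff.mpr ⟨hw₀E, hw₀S⟩, fun h => hw₀E' (Finset.mem_sdiff.mp h).1⟩)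
    have hEc : (resEdges G (insert u D) ∩ S).card + 1 ≤ (resEdges G D ∩ S).card := by
      have hsub : resEdges G (insert u D) ∩ S ⊆ resEdges G D ∩ S :=
        Finset.inter_subset_inter hEsub (Finset.Subset.refl S)
      exact Finset.card_lt_card ((Finset.ssubset_iff_of_subset hsub).mpr
        ⟨z, Finset.mem_inter.mpr ⟨hzE, hzS⟩, fun h => hzE' (Finset.mem_inter.mp h).1⟩)
    simp only [hweight]
    omega
  · -- both removed edges are non-special
    have hpair : ({w₀, z} : Finset V) ⊆ resEdges G D \ S := by
      intro t ht
      rw [Finset.mem_insert, Finset.mem_singleton] at ht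
      rcases ht with h | h
      · subst h; exact Finset.mem_sdiff.mpr ⟨hw₀E, hw₀S⟩
      · subst h; exact Finset.mem_sdiff.mpr ⟨hzE, hzS⟩
    have hsub2 : resEdges G (insert u D) \ S ⊆ (resEdges G D \ S) \ {w₀, z} := by
      intro t ht
      rw [Finset.mem_sdiff] at ht
      refine Finset.mem_sdiff.mpr ⟨Finset.mem_sdiff.mpr ⟨hEsub ht.1, ht.2⟩, ?_⟩
      rw [Finset.mem_insert, Finset.mem_singleton]
      rintro (h | h)
      · subst h; exact hw₀E' ht.1
      · subst h; exact hzE' ht.1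
    have hC : (resEdges G (insert u D) \ S).card + 2 ≤ (resEdges G D \ S).card := by
      have h1 : (resEdges G (insert u D) \ S).card ≤
          ((resEdges G D \ S) \ {w₀, z}).card := Finset.card_le_card hsub2
      have h2 : ((resEdges G D \ S) \ {w₀, z}).card =
          (resEdges G D \ S).card - ({w₀, z} : Finset V).card :=
        Finset.card_sdiff_of_subset hpair
      have h3 : ({w₀, z} : Finset V).card = 2 := Finset.card_pair hzw.symm
      have h4 : ({w₀, z} : Finset V).card ≤ (resEdges G D \ S).card :=
        Finset.card_le_card hpair
      omega
    have hEc : (resEdges G (insert u D) ∩ S).card ≤ (resEdges G D ∩ S).card :=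
      Finset.card_le_card (Finset.inter_subset_inter hEsub (Finset.Subset.refl S))
    simp only [hweight]
    omega
end

section
/- Let H be a nonempty residual hypergraph arising from H_0 = ONH(G) with special set S, and suppose that every special vertex of H belongs to an edge forming a connected component of H by itself (an isolated edge). Then playing any vertex v ∈ V(H) decreases the weight f by at least 22. -/
/- The open neighborhood hypergraph `ONH(G)` of a finite simple graph `G` has vertex
set `V(G)` and edge multiset `{N_G(v) : v ∈ V(G)}`; we represent its edges as the
family indexed by the vertices, `u ↦ N_G(u)` (so edges are counted with
multiplicity via their indices). -/

open Finset

variable {V : Type*} [Fintype V] [DecidableEq V]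

section Lemma8Aux

variable (G : SimpleGraph V) [DecidableRel G.Adj]

lemma myCardHelper {α : Type*} [DecidableEq α] {X X' T : Finset α} (h1 : X' ⊆ X) (h2 : T ⊆ X)
    (h3 : ∀ a ∈ T, a ∉ X') : X'.card + T.card ≤ X.card := by
  have hd : Disjoint X' T := Finset.disjoint_left.mpr fun _ ha hb => h3 _ hb ha
  calc X'.card + T.card = (X' ∪ T).card := (Finset.card_union_of_disjoint hd).symm
    _ ≤ X.card := Finset.card_le_card (Finset.union_subset h1 h2)

lemma myMem_resEdges {D : Finset V} {u : V} :
    u ∈ resEdges G D ↔ Disjoint (G.neighborFinset u) D := by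
  simp [resEdges]

lemma myResEdges_subset (D : Finset V) (v : V) :
    resEdges G (insert v D) ⊆ resEdges G D := by
  intro u hu
  rw [myMem_resEdges] at hu ⊢
  exact hu.mono_right (Finset.subset_insert v D)

lemma myMem_resVerts {D : Finset V} {w : V} :
    w ∈ resVerts G D ↔ ∃ u ∈ resEdges G D, w ∈ G.neighborFinset u := by
  simp [resVerts]

lemma myNotMemInsert (D : Finset V) (v : V) : v ∉ resVerts G (insert v D) := by
  rw [myMem_resVerts]
  rintro ⟨u, hu, hvu⟩
  rw [myMem_resEdges] at hu
  exact Finset.disjoint_left.mp hu hvu (Finset.mem_insert_self v D)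

lemma myResVerts_subset (D : Finset V) (v : V) :
    resVerts G (insert v D) ⊆ resVerts G D := by
  intro w hw
  rw [myMem_resVerts] at hw ⊢
  obtain ⟨u, hu, h⟩ := hw
  exact ⟨u, myResEdges_subset G D v hu, h⟩

/-- The finset of Type-X edge sets. -/
def Tset (S D : Finset V) : Finset (Finset V) :=
  ((resEdges G D).image fun u => G.neighborFinset u).filter fun e =>
    (∀ w ∈ e, ∀ u ∈ resEdges G D, w ∈ G.neighborFinset u → G.neighborFinset u = e) ∧
      2 ≤ (e \ S).card

lemma numTypeX_eq_Tset (S D : Finset V) : numTypeX G S D = (Tset G S D).card := rfl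

end Lemma8Aux

/-- Lemma 8: if the residual hypergraph is nonempty and each of its special vertices
belongs to an isolated edge, then playing any vertex of it decreases the weight `f`
by at least 22. -/
theorem play_decrease_twentytwo (G : SimpleGraph V) [DecidableRel G.Adj] (S : Finset V)
    (hiso : ∀ v : V, 0 < G.degree v)
    (hisoedge : ∀ v w : V, G.Adj v w → ¬(G.degree v = 1 ∧ G.degree w = 1))
    (hS : IsSpecialSet G S)
    (D : Finset V) (hD : TGReachable G D) (hE : (resEdges G D).Nonempty)
    (hsp : ∀ s ∈ resVerts G D ∩ S, ∃ e : Finset V, IsIsolatedEdge G D e ∧ s ∈ e)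
    (v : V) (hv : v ∈ resVerts G D) :
    22 ≤ hweight G S D - hweight G S (insert v D) := by
    classical
  set D' := insert v D with hD'def
  have hEsub : resEdges G D' ⊆ resEdges G D := myResEdges_subset G D v
  have hVsub : resVerts G D' ⊆ resVerts G D := myResVerts_subset G D v
  have hvD' : v ∉ resVerts G D' := myNotMemInsert G D v
  obtain ⟨u₀, hu₀, hvu₀⟩ := (myMem_resVerts G).mp hv
  have hu₀' : u₀ ∉ resEdges G D' := by
    rw [myMem_resEdges]
    intro h
    exact Finset.disjoint_left.mp h hvu₀ (Finset.mem_insert_self v D)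
  have hedgecard : (resEdges G D' \ S).card + (resEdges G D' ∩ S).card + 1 ≤
      (resEdges G D \ S).card + (resEdges G D ∩ S).card := by
    have h1 : (resEdges G D' \ S).card + (resEdges G D' ∩ S).card = (resEdges G D').card :=
      Finset.card_sdiff_add_card_inter _ _
    have h2 : (resEdges G D \ S).card + (resEdges G D ∩ S).card = (resEdges G D).card :=
      Finset.card_sdiff_add_card_inter _ _
    have h3 : (resEdges G D').card < (resEdges G D).card :=
      Finset.card_lt_card ((Finset.ssubset_iff_of_subset hEsub).mpr ⟨u₀, hu₀, hu₀'⟩)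
    omega
  have hC : (resEdges G D' \ S).card ≤ (resEdges G D \ S).card :=
    Finset.card_le_card (Finset.sdiff_subset_sdiff hEsub (le_refl S))
  have hEc : (resEdges G D' ∩ S).card ≤ (resEdges G D ∩ S).card :=
    Finset.card_le_card (Finset.inter_subset_inter hEsub (le_refl S))
  have hAle : (resVerts G D' \ S).card ≤ (resVerts G D \ S).card :=
    Finset.card_le_card (Finset.sdiff_subset_sdiff hVsub (le_refl S))
  have hBle : (resVerts G D' ∩ S).card ≤ (resVerts G D ∩ S).card :=
    Finset.card_le_card (Finset.inter_subset_inter hVsub (le_refl S))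
  set Tv := (Tset G S D).filter (fun e => v ∈ e) with hTvdef
  have hTsub : Tset G S D ⊆ Tset G S D' ∪ Tv := by
    intro e he
    by_cases hve : v ∈ e
    · exact Finset.mem_union_right _ (Finset.mem_filter.mpr ⟨he, hve⟩)
    · apply Finset.mem_union_left
      simp only [Tset, Finset.mem_filter, Finset.mem_image] at he ⊢
      obtain ⟨⟨u, hu, rfl⟩, hisol, hcard⟩ := he
      refine ⟨⟨u, ?_, rfl⟩, ?_, hcard⟩
      · rw [myMem_resEdges] at hu ⊢
        rw [hD'def, Finset.disjoint_insert_right]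
        exact ⟨hve, hu⟩
      · intro w hw u' hu' hwu'
        exact hisol w hw u' (hEsub hu') hwu'
  have hxle : numTypeX G S D ≤ numTypeX G S D' + Tv.card := by
    rw [numTypeX_eq_Tset, numTypeX_eq_Tset]
    exact le_trans (Finset.card_le_card hTsub) (Finset.card_union_le _ _)
  have hTv1 : Tv.card ≤ 1 := by
    rw [Finset.card_le_one]
    intro e₁ he₁ e₂ he₂
    simp only [hTvdef, Tset, Finset.mem_filter, Finset.mem_image] at he₁ he₂
    obtain ⟨⟨⟨u₁, hu₁, rfl⟩, _, _⟩, hve₁⟩ := he₁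
    obtain ⟨⟨_, hisol₂, _⟩, hve₂⟩ := he₂
    exact hisol₂ v hve₂ u₁ hu₁ hve₁
  have hTvA : ∀ e₀ ∈ Tv, (resVerts G D' \ S).card + 2 ≤ (resVerts G D \ S).card := by
    intro e₀ he₀
    simp only [hTvdef, Tset, Finset.mem_filter, Finset.mem_image] at he₀
    obtain ⟨⟨⟨u₁, hu₁, rfl⟩, hisol, hcard⟩, hve₀⟩ := he₀
    have hsubV : G.neighborFinset u₁ ⊆ resVerts G D := by
      intro w hw
      rw [myMem_resVerts]
      exact ⟨u₁, hu₁, hw⟩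
    have hdrop : ∀ w ∈ G.neighborFinset u₁ \ S, w ∉ resVerts G D' \ S := by
      intro w hw hw'
      obtain ⟨u', hu', hwu'⟩ := (myMem_resVerts G).mp (Finset.mem_sdiff.mp hw').1
      have heq : G.neighborFinset u' = G.neighborFinset u₁ :=
        hisol w (Finset.mem_sdiff.mp hw).1 u' (hEsub hu') hwu'
      rw [myMem_resEdges] at hu'
      exact Finset.disjoint_left.mp hu' (by rw [heq]; exact hve₀)
        (by rw [hD'def]; exact Finset.mem_insert_self v D)
    have := myCardHelper (Finset.sdiff_subset_sdiff hVsub (le_refl S))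
      (Finset.sdiff_subset_sdiff hsubV (le_refl S)) hdrop
    omega
  by_cases hvS : v ∈ S
  · -- v is special
    have hB1 : (resVerts G D' ∩ S).card + 1 ≤ (resVerts G D ∩ S).card := by
      have := myCardHelper (X := resVerts G D ∩ S) (T := {v})
        (Finset.inter_subset_inter hVsub (le_refl S))
        (by intro a ha; rw [Finset.mem_singleton] at ha; subst ha
            exact Finset.mem_inter.mpr ⟨hv, hvS⟩)
        (by intro a ha ha'; rw [Finset.mem_singleton] at ha; subst ha
            exact hvD' (Finset.mem_inter.mp ha').1)
      simpa using this
    obtain ⟨e, ⟨⟨u, hu, hNu⟩, hisolE⟩, hve⟩ := hsp v (Finset.mem_inter.mpr ⟨hv, hvS⟩)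
    have hvNu : v ∈ G.neighborFinset u := by rw [hNu]; exact hve
    have hadj : G.Adj u v := (SimpleGraph.mem_neighborFinset G u v).mp hvNu
    have hdegv : G.degree v = 1 := hS.1 v hvS
    have hdegu : 1 < G.degree u := by
      have h := hisoedge u v hadj
      have h2 := hiso u
      omega
    have hcardu : 1 < (G.neighborFinset u).card := by
      rwa [SimpleGraph.card_neighborFinset_eq_degree]
    obtain ⟨w, hwNu, hwv⟩ := Finset.exists_mem_ne hcardu v
    have hwS : w ∉ S := by
      intro hwS'
      obtain ⟨x, _, hxuniq⟩ := hS.2 u ⟨v, hvNu, hdegv⟩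
      exact hwv ((hxuniq w ⟨hwS', hwNu⟩).trans (hxuniq v ⟨hvS, hvNu⟩).symm)
    have hwD' : w ∉ resVerts G D' := by
      intro hw'
      obtain ⟨u', hu', hwu'⟩ := (myMem_resVerts G).mp hw'
      have heq : G.neighborFinset u' = e := hisolE w (hNu ▸ hwNu) u' (hEsub hu') hwu'
      rw [myMem_resEdges] at hu'
      exact Finset.disjoint_left.mp hu' (by rw [heq]; exact hve)
        (by rw [hD'def]; exact Finset.mem_insert_self v D)
    have hA1 : (resVerts G D' \ S).card + 1 ≤ (resVerts G D \ S).card := by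
      have := myCardHelper (X := resVerts G D \ S) (T := {w})
        (Finset.sdiff_subset_sdiff hVsub (le_refl S))
        (by intro a ha; rw [Finset.mem_singleton] at ha; subst ha
            exact Finset.mem_sdiff.mpr ⟨(myMem_resVerts G).mpr ⟨u, hu, hwNu⟩, hwS⟩)
        (by intro a ha ha'; rw [Finset.mem_singleton] at ha; subst ha
            exact hwD' (Finset.mem_sdiff.mp ha').1)
      simpa using this
    rcases Tv.eq_empty_or_nonempty with hT | ⟨e₀, he₀⟩
    · have hx0 : numTypeX G S D ≤ numTypeX G S D' := by
        rw [hT] at hxle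
        simpa using hxle
      simp only [hweight]
      omega
    · have hA2 := hTvA e₀ he₀
      simp only [hweight]
      omega
  · -- v is not special
    have hA1 : (resVerts G D' \ S).card + 1 ≤ (resVerts G D \ S).card := by
      have := myCardHelper (X := resVerts G D \ S) (T := {v})
        (Finset.sdiff_subset_sdiff hVsub (le_refl S))
        (by intro a ha; rw [Finset.mem_singleton] at ha; subst ha
            exact Finset.mem_sdiff.mpr ⟨hv, hvS⟩)
        (by intro a ha ha'; rw [Finset.mem_singleton] at ha; subst ha
            exact hvD' (Finset.mem_sdiff.mp ha').1)
      simpa using this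
    rcases Tv.eq_empty_or_nonempty with hT | ⟨e₀, he₀⟩
    · have hx0 : numTypeX G S D ≤ numTypeX G S D' := by
        rw [hT] at hxle
        simpa using hxle
      simp only [hweight]
      omega
    · have hA2 := hTvA e₀ he₀
      simp only [hweight]
      omega
end

section
/- Let H be a nonempty residual hypergraph arising from H_0 = ONH(G) with special set S, and suppose that the maximum degree of H is at most 1 (every vertex of H lies in exactly one edge of H). Then every edge of H is an isolated edge, and playing any vertex v ∈ V(H) decreases the weight f by at least 28. -/
/- The open neighborhood hypergraph `ONH(G)` of a finite simple graph `G` has vertex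
set `V(G)` and edge multiset `{N_G(v) : v ∈ V(G)}`; we represent its edges as the
family indexed by the vertices, `u ↦ N_G(u)` (so edges are counted with
multiplicity via their indices). -/

open Finset

variable {V : Type*} [Fintype V] [DecidableEq V]

lemma res_uniq (G : SimpleGraph V) [DecidableRel G.Adj] {D : Finset V}
    (hmax : ∀ w : V, resDeg G D w ≤ 1) {u₁ u₂ w : V} (h₁ : u₁ ∈ resEdges G D)
    (h₂ : u₂ ∈ resEdges G D) (hw₁ : w ∈ G.neighborFinset u₁)
    (hw₂ : w ∈ G.neighborFinset u₂) : u₁ = u₂ := by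
  by_contra hne
  have hsub : ({u₁, u₂} : Finset V) ⊆ (resEdges G D).filter fun u => w ∈ G.neighborFinset u := by
    intro x hx
    rcases Finset.mem_insert.1 hx with rfl | hx
    · exact Finset.mem_filter.2 ⟨h₁, hw₁⟩
    · rcases Finset.mem_singleton.1 hx with rfl
      exact Finset.mem_filter.2 ⟨h₂, hw₂⟩
  have h2 : 2 ≤ resDeg G D w := by
    have := Finset.card_le_card hsub
    rwa [Finset.card_pair hne] at this
  have := hmax w
  unfold resDeg at *
  omega

lemma numTypeX_eq (G : SimpleGraph V) [DecidableRel G.Adj] (S : Finset V)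
    (hiso : ∀ v : V, 0 < G.degree v) {D : Finset V}
    (hmax : ∀ w : V, resDeg G D w ≤ 1) :
    numTypeX G S D
      = ((resEdges G D).filter fun u => 2 ≤ (G.neighborFinset u \ S).card).card := by
  have hinj : Set.InjOn (fun u => G.neighborFinset u) (resEdges G D) := by
    intro u₁ h₁ u₂ h₂ heq
    have hne : (G.neighborFinset u₁).Nonempty := by
      rw [← Finset.card_pos, G.card_neighborFinset_eq_degree]
      exact hiso u₁
    obtain ⟨w, hw⟩ := hne
    have heq' : G.neighborFinset u₁ = G.neighborFinset u₂ := heq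
    exact res_uniq G hmax h₁ h₂ hw (heq' ▸ hw)
  have hall : ∀ e ∈ (resEdges G D).image (fun u => G.neighborFinset u),
      ((∀ w ∈ e, ∀ u ∈ resEdges G D, w ∈ G.neighborFinset u → G.neighborFinset u = e) ∧
        2 ≤ (e \ S).card) ↔ 2 ≤ (e \ S).card := by
    intro e he
    obtain ⟨u', hu', rfl⟩ := Finset.mem_image.1 he
    exact ⟨fun h => h.2, fun h => ⟨fun w hw u hu hwu => by
      rw [res_uniq G hmax hu hu' hwu hw], h⟩⟩
  unfold numTypeX
  rw [Finset.filter_congr hall, Finset.filter_image,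
    Finset.card_image_of_injOn (hinj.mono (Finset.coe_subset.2 (Finset.filter_subset _ _)))]

/-- Lemma 9 (Phase 4): if the residual hypergraph is nonempty and has maximum degree
at most 1 (every vertex of it lies in exactly one edge), then every edge of it is an
isolated edge and playing any vertex of it decreases the weight `f` by at
least 28. -/
theorem max_degree_one_decrease (G : SimpleGraph V) [DecidableRel G.Adj] (S : Finset V)
    (hiso : ∀ v : V, 0 < G.degree v)
    (hisoedge : ∀ v w : V, G.Adj v w → ¬(G.degree v = 1 ∧ G.degree w = 1))
    (hS : IsSpecialSet G S)
    (D : Finset V) (hD : TGReachable G D) (hE : (resEdges G D).Nonempty)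
    (hmax : ∀ w : V, resDeg G D w ≤ 1) :
    (∀ u ∈ resEdges G D, IsIsolatedEdge G D (G.neighborFinset u)) ∧
      ∀ v ∈ resVerts G D, 28 ≤ hweight G S D - hweight G S (insert v D) := by
  constructor
  · intro u hu
    unfold IsIsolatedEdge
    refine ⟨⟨u, hu, rfl⟩, fun w hw u' hu' hwu' => ?_⟩
    rw [res_uniq G hmax hu' hu hwu' hw]
  · intro v hv
    unfold resVerts at hv
    obtain ⟨u₀, hu₀, hvu₀⟩ := Finset.mem_biUnion.1 hv
    set e := G.neighborFinset u₀ with he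
    set D' := insert v D with hD'
    have hE' : resEdges G D' = (resEdges G D).erase u₀ := by
      ext u
      simp only [resEdges, Finset.mem_filter, Finset.mem_univ, true_and, Finset.mem_erase,
        hD', Finset.disjoint_insert_right]
      constructor
      · rintro ⟨hvu, hd⟩
        exact ⟨fun h => hvu (h ▸ hvu₀), hd⟩
      · rintro ⟨hne, hd⟩
        refine ⟨fun hvu => hne ?_, hd⟩
        exact res_uniq G hmax (by simp [resEdges, hd]) hu₀ hvu hvu₀
    have hsub : resEdges G D' ⊆ resEdges G D := by
      rw [hE']; exact Finset.erase_subset _ _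
    have hmax' : ∀ w : V, resDeg G D' w ≤ 1 := by
      intro w
      refine le_trans ?_ (hmax w)
      exact Finset.card_le_card (Finset.filter_subset_filter _ hsub)
    have hV' : resVerts G D' = resVerts G D \ e := by
      ext w
      simp only [resVerts, Finset.mem_biUnion, Finset.mem_sdiff, hE', Finset.mem_erase]
      constructor
      · rintro ⟨u, ⟨hne, hu⟩, hwu⟩
        exact ⟨⟨u, hu, hwu⟩, fun hwe => hne (res_uniq G hmax hu hu₀ hwu hwe)⟩
      · rintro ⟨⟨u, hu, hwu⟩, hwe⟩
        refine ⟨u, ⟨fun h => hwe ?_, hu⟩, hwu⟩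
        rw [he, ← h]; exact hwu
    have heV : e ⊆ resVerts G D := fun w hw => Finset.mem_biUnion.2 ⟨u₀, hu₀, hw⟩
    have hv1 : (resVerts G D' \ S).card + (e \ S).card = (resVerts G D \ S).card := by
      rw [hV']
      have hid : (resVerts G D \ e) \ S = (resVerts G D \ S) \ (e \ S) := by
        ext x; simp only [Finset.mem_sdiff]; tauto
      rw [hid]
      refine Finset.card_sdiff_add_card_eq_card ?_
      intro x hx
      simp only [Finset.mem_sdiff] at *
      exact ⟨heV hx.1, hx.2⟩
    have hv2 : (resVerts G D' ∩ S).card + (e ∩ S).card = (resVerts G D ∩ S).card := by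
      rw [hV']
      have hid : (resVerts G D \ e) ∩ S = (resVerts G D ∩ S) \ (e ∩ S) := by
        ext x; simp only [Finset.mem_sdiff, Finset.mem_inter]; tauto
      rw [hid]
      refine Finset.card_sdiff_add_card_eq_card ?_
      intro x hx
      simp only [Finset.mem_inter] at *
      exact ⟨heV hx.1, hx.2⟩
    have he1 : (resEdges G D' \ S).card + (if u₀ ∈ S then 0 else 1)
        = (resEdges G D \ S).card := by
      rw [hE']
      by_cases hs : u₀ ∈ S
      · rw [if_pos hs, add_zero]
        congr 1
        ext x
        simp only [Finset.mem_sdiff, Finset.mem_erase]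
        constructor
        · rintro ⟨⟨_, hx⟩, hxs⟩; exact ⟨hx, hxs⟩
        · rintro ⟨hx, hxs⟩; exact ⟨⟨fun h => hxs (h ▸ hs), hx⟩, hxs⟩
      · rw [if_neg hs]
        have hid : ((resEdges G D).erase u₀) \ S = ((resEdges G D) \ S).erase u₀ := by
          ext x; simp only [Finset.mem_sdiff, Finset.mem_erase]; tauto
        rw [hid]
        exact Finset.card_erase_add_one (Finset.mem_sdiff.2 ⟨hu₀, hs⟩)
    have he2 : (resEdges G D' ∩ S).card + (if u₀ ∈ S then 1 else 0)
        = (resEdges G D ∩ S).card := by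
      rw [hE']
      by_cases hs : u₀ ∈ S
      · rw [if_pos hs]
        have hid : (resEdges G D).erase u₀ ∩ S = ((resEdges G D) ∩ S).erase u₀ := by
          ext x; simp only [Finset.mem_inter, Finset.mem_erase]; tauto
        rw [hid]
        exact Finset.card_erase_add_one (Finset.mem_inter.2 ⟨hu₀, hs⟩)
      · rw [if_neg hs, add_zero]
        congr 1
        ext x
        simp only [Finset.mem_inter, Finset.mem_erase]
        constructor
        · rintro ⟨⟨_, hx⟩, hxs⟩; exact ⟨hx, hxs⟩
        · rintro ⟨hx, hxs⟩; exact ⟨⟨fun h => hs (h ▸ hxs), hx⟩, hxs⟩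
    have hx : numTypeX G S D' + (if 2 ≤ (e \ S).card then 1 else 0) = numTypeX G S D := by
      rw [numTypeX_eq G S hiso hmax, numTypeX_eq G S hiso hmax', hE', Finset.filter_erase]
      by_cases h2 : 2 ≤ (e \ S).card
      · rw [if_pos h2]
        exact Finset.card_erase_add_one (Finset.mem_filter.2 ⟨hu₀, h2⟩)
      · rw [if_neg h2, add_zero]
        have hnm : u₀ ∉ (resEdges G D).filter fun u => 2 ≤ (G.neighborFinset u \ S).card :=
          fun hmem => h2 (Finset.mem_filter.1 hmem).2
        rw [Finset.erase_eq_of_notMem hnm]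
    have hb : (e ∩ S).card ≤ 1 := by
      by_contra hb
      have hb2 : 1 < (e ∩ S).card := by omega
      obtain ⟨x, hx', y, hy', hxy⟩ := Finset.one_lt_card.1 hb2
      obtain ⟨hxe, hxS⟩ := Finset.mem_inter.1 hx'
      obtain ⟨hye, hyS⟩ := Finset.mem_inter.1 hy'
      obtain ⟨z, _, hzu⟩ := hS.2 u₀ ⟨x, hxe, hS.1 x hxS⟩
      exact hxy ((hzu x ⟨hxS, hxe⟩).trans (hzu y ⟨hyS, hye⟩).symm)
    have hcard : 1 ≤ (e \ S).card + (e ∩ S).card := by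
      rw [Finset.card_sdiff_add_card_inter, he, G.card_neighborFinset_eq_degree]
      exact hiso u₀
    have hsub1 : (e \ S).card = 1 → (e ∩ S).card = 0 → u₀ ∈ S := by
      intro ha hbz
      have hc1 : e.card = 1 := by
        have := Finset.card_sdiff_add_card_inter e S; omega
      obtain ⟨w, hw⟩ := Finset.card_eq_one.1 hc1
      have hwe : w ∈ e := hw ▸ Finset.mem_singleton_self w
      have hdegu₀ : G.degree u₀ = 1 := by
        rw [← G.card_neighborFinset_eq_degree, ← he]; exact hc1
      have huw : u₀ ∈ G.neighborFinset w := by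
        rw [SimpleGraph.mem_neighborFinset]
        have : G.Adj u₀ w := by rw [← SimpleGraph.mem_neighborFinset]; exact hwe
        exact this.symm
      obtain ⟨v', ⟨hv'S, hv'N⟩, _⟩ := hS.2 w ⟨u₀, huw, hdegu₀⟩
      have hdv' : G.degree v' = 1 := hS.1 v' hv'S
      have hwv' : w ∈ G.neighborFinset v' := by
        rw [SimpleGraph.mem_neighborFinset] at hv'N ⊢
        exact hv'N.symm
      have hNv' : G.neighborFinset v' = e := by
        rw [hw]
        have hc : (G.neighborFinset v').card = 1 := by
          rw [G.card_neighborFinset_eq_degree]; exact hdv'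
        obtain ⟨z, hz⟩ := Finset.card_eq_one.1 hc
        rw [hz] at hwv' ⊢
        rw [Finset.mem_singleton] at hwv'
        rw [hwv']
      have hv'R : v' ∈ resEdges G D := by
        simp only [resEdges, Finset.mem_filter, Finset.mem_univ, true_and, hNv', he]
        have := (Finset.mem_filter.1 hu₀).2
        exact this
      have hveq := res_uniq G hmax hv'R hu₀ hwv' hwe
      rwa [← hveq]
    have hsub2 : ¬((e \ S).card = 0 ∧ (e ∩ S).card = 1) := by
      rintro ⟨ha, hb1⟩
      have hc1 : e.card = 1 := by
        have := Finset.card_sdiff_add_card_inter e S; omega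
      obtain ⟨w, hwi⟩ := Finset.card_eq_one.1 hb1
      have hwe : w ∈ e ∩ S := hwi ▸ Finset.mem_singleton_self w
      obtain ⟨hwe', hwS⟩ := Finset.mem_inter.1 hwe
      have hadj : G.Adj u₀ w := by rw [← SimpleGraph.mem_neighborFinset]; exact hwe'
      refine hisoedge u₀ w hadj ⟨?_, hS.1 w hwS⟩
      rw [← G.card_neighborFinset_eq_degree, ← he]; exact hc1
    unfold hweight
    by_cases hs : u₀ ∈ S
    · rw [if_pos hs, add_zero] at he1
      rw [if_pos hs] at he2
      by_cases h2 : 2 ≤ (e \ S).card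
      · rw [if_pos h2] at hx
        omega
      · rw [if_neg h2, add_zero] at hx
        omega
    · have h10 : (e \ S).card ≠ 1 ∨ (e ∩ S).card ≠ 0 := by
        by_cases h1 : (e \ S).card = 1
        · by_cases h0 : (e ∩ S).card = 0
          · exact absurd (hsub1 h1 h0) hs
          · exact Or.inr h0
        · exact Or.inl h1
      have hsub2' : (e \ S).card ≠ 0 ∨ (e ∩ S).card ≠ 1 := by
        by_cases h1 : (e \ S).card = 0
        · by_cases h0 : (e ∩ S).card = 1
          · exact absurd ⟨h1, h0⟩ hsub2
          · exact Or.inr h0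
        · exact Or.inl h1
      rw [if_neg hs] at he1
      rw [if_neg hs, add_zero] at he2
      by_cases h2 : 2 ≤ (e \ S).card
      · rw [if_pos h2] at hx
        omega
      · rw [if_neg h2, add_zero] at hx
        omega
end

section
/- Let H be a residual hypergraph arising from H_0 = ONH(G) with special set S. If v ∈ V(H) has degree exactly 2 in H and there is a non-special vertex u of degree exactly 1 in H sharing an edge with v, then playing v decreases the weight f by at least 44. -/
/- The open neighborhood hypergraph `ONH(G)` of a finite simple graph `G` has vertex
set `V(G)` and edge multiset `{N_G(v) : v ∈ V(G)}`; we represent its edges as the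
family indexed by the vertices, `u ↦ N_G(u)` (so edges are counted with
multiplicity via their indices). -/

open Finset

variable {V : Type*} [Fintype V] [DecidableEq V]

/-- If `v` has degree exactly 2 in the residual hypergraph and some non-special
degree-1 vertex `u` shares an edge with `v`, then playing `v` decreases the
weight `f` by at least 44. -/
theorem play_degree_two_with_pendant_decrease (G : SimpleGraph V) [DecidableRel G.Adj] (S : Finset V)
    (hiso : ∀ v : V, 0 < G.degree v)
    (hisoedge : ∀ v w : V, G.Adj v w → ¬(G.degree v = 1 ∧ G.degree w = 1))
    (hS : IsSpecialSet G S)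
    (D : Finset V) (hD : TGReachable G D)
    (v u : V) (hdegv : resDeg G D v = 2)
    (huS : u ∉ S) (hdegu : resDeg G D u = 1) (huv : u ≠ v)
    (hshare : ShareEdge G D v u) :
    44 ≤ hweight G S D - hweight G S (insert v D) := by
  classical
  obtain ⟨w₀, hw₀E, hvw₀, huw₀⟩ := hshare
  have hE' : resEdges G (insert v D)
      = (resEdges G D).filter fun w => v ∉ G.neighborFinset w := by
    ext w
    simp [resEdges, Finset.disjoint_insert_right]
    tauto
  have hFcard : ((resEdges G D).filter fun w => v ∈ G.neighborFinset w).card = 2 := hdegv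
  have hFsub : ((resEdges G D).filter fun w => v ∈ G.neighborFinset w) ⊆ resEdges G D :=
    filter_subset _ _
  have hE'2 : resEdges G (insert v D)
      = resEdges G D \ (resEdges G D).filter (fun w => v ∈ G.neighborFinset w) := by
    rw [hE', filter_not]
  have hE'subE : resEdges G (insert v D) ⊆ resEdges G D := by
    rw [hE'2]; exact sdiff_subset
  have hvE' : ∀ w ∈ resEdges G (insert v D), v ∉ G.neighborFinset w := by
    intro w hw; rw [hE'] at hw; exact (mem_filter.mp hw).2
  have huE' : ∀ w ∈ resEdges G (insert v D), u ∉ G.neighborFinset w := by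
    intro w hw hu
    have h1 : w ∈ (resEdges G D).filter fun t => u ∈ G.neighborFinset t :=
      mem_filter.mpr ⟨hE'subE hw, hu⟩
    have h0 : w₀ ∈ (resEdges G D).filter fun t => u ∈ G.neighborFinset t :=
      mem_filter.mpr ⟨hw₀E, huw₀⟩
    have hww : w = w₀ := Finset.card_le_one.mp (le_of_eq hdegu) _ h1 _ h0
    exact hvE' w hw (hww ▸ hvw₀)
  have huV : u ∈ resVerts G D := mem_biUnion.mpr ⟨w₀, hw₀E, huw₀⟩
  have hvV : v ∈ resVerts G D := mem_biUnion.mpr ⟨w₀, hw₀E, hvw₀⟩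
  have huV' : u ∉ resVerts G (insert v D) := by
    intro h
    obtain ⟨w, hw, hu⟩ := mem_biUnion.mp h
    exact huE' w hw hu
  have hvV' : v ∉ resVerts G (insert v D) := by
    intro h
    obtain ⟨w, hw, hv⟩ := mem_biUnion.mp h
    exact hvE' w hw hv
  have hVsub : resVerts G (insert v D) ⊆ resVerts G D :=
    biUnion_subset_biUnion_of_subset_left _ hE'subE
  have hvS : v ∉ S := by
    intro h
    have hdeg1 := hS.1 v h
    have hsub : ((resEdges G D).filter fun w => v ∈ G.neighborFinset w)
        ⊆ G.neighborFinset v := by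
      intro w hw
      have h2 := (mem_filter.mp hw).2
      rw [SimpleGraph.mem_neighborFinset] at h2 ⊢
      exact h2.symm
    have hle := Finset.card_le_card hsub
    rw [hFcard] at hle
    have : G.degree v = (G.neighborFinset v).card := rfl
    omega
  -- vertex counts
  have hAsub : resVerts G (insert v D) \ S ⊆ resVerts G D \ S :=
    sdiff_subset_sdiff hVsub Subset.rfl
  have hins : insert u (insert v (resVerts G (insert v D) \ S)) ⊆ resVerts G D \ S := by
    intro z hz
    simp only [mem_insert] at hz
    rcases hz with rfl | rfl | hz
    · exact mem_sdiff.mpr ⟨huV, huS⟩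
    · exact mem_sdiff.mpr ⟨hvV, hvS⟩
    · exact hAsub hz
  have hcard2 : (resVerts G (insert v D) \ S).card + 2 ≤ (resVerts G D \ S).card := by
    have h1 : v ∉ resVerts G (insert v D) \ S := fun h => hvV' (mem_sdiff.mp h).1
    have h2 : u ∉ insert v (resVerts G (insert v D) \ S) := by
      simp only [mem_insert]
      rintro (rfl | h)
      · exact huv rfl
      · exact huV' (mem_sdiff.mp h).1
    have hle := card_le_card hins
    rw [card_insert_of_notMem h2, card_insert_of_notMem h1] at hle
    omega
  have hb : (resVerts G (insert v D) ∩ S).card ≤ (resVerts G D ∩ S).card :=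
    card_le_card (inter_subset_inter hVsub Subset.rfl)
  -- edge counts
  have hunion : resEdges G (insert v D) ∪ (resEdges G D).filter (fun w => v ∈ G.neighborFinset w)
      = resEdges G D := by
    rw [hE'2]; exact sdiff_union_of_subset hFsub
  have hdisj : Disjoint (resEdges G (insert v D))
      ((resEdges G D).filter (fun w => v ∈ G.neighborFinset w)) := by
    rw [hE'2]; exact sdiff_disjoint
  have hc : (resEdges G D \ S).card = (resEdges G (insert v D) \ S).card
      + (((resEdges G D).filter (fun w => v ∈ G.neighborFinset w)) \ S).card := by
    conv_lhs => rw [← hunion]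
    rw [union_sdiff_distrib]
    exact card_union_of_disjoint (hdisj.mono sdiff_subset sdiff_subset)
  have hd : (resEdges G D ∩ S).card = (resEdges G (insert v D) ∩ S).card
      + (((resEdges G D).filter (fun w => v ∈ G.neighborFinset w)) ∩ S).card := by
    conv_lhs => rw [← hunion]
    rw [union_inter_distrib_right]
    exact card_union_of_disjoint (hdisj.mono inter_subset_left inter_subset_left)
  have hF2 : ((((resEdges G D).filter (fun w => v ∈ G.neighborFinset w)) \ S).card)
      + ((((resEdges G D).filter (fun w => v ∈ G.neighborFinset w)) ∩ S).card) = 2 := by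
    rw [Finset.card_sdiff_add_card_inter, hFcard]
  -- Type-X monotonicity
  have hx : numTypeX G S D ≤ numTypeX G S (insert v D) := by
    unfold numTypeX
    apply card_le_card
    intro e he
    rw [mem_filter] at he ⊢
    obtain ⟨heim, hisoe, he2⟩ := he
    have hve : v ∉ e := by
      intro hve
      obtain ⟨t₁, t₂, ht12, hFeq⟩ := Finset.card_eq_two.mp hFcard
      have ht₁F : t₁ ∈ (resEdges G D).filter fun w => v ∈ G.neighborFinset w := by
        rw [hFeq]; simp
      have ht₂F : t₂ ∈ (resEdges G D).filter fun w => v ∈ G.neighborFinset w := by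
        rw [hFeq]; simp
      have ht₁E : t₁ ∈ resEdges G D := hFsub ht₁F
      have ht₂E : t₂ ∈ resEdges G D := hFsub ht₂F
      have hNe1 : G.neighborFinset t₁ = e := hisoe v hve t₁ ht₁E (mem_filter.mp ht₁F).2
      have hNe2 : G.neighborFinset t₂ = e := hisoe v hve t₂ ht₂E (mem_filter.mp ht₂F).2
      have hNw₀ : G.neighborFinset w₀ = e := hisoe v hve w₀ hw₀E hvw₀
      have hue : u ∈ e := hNw₀ ▸ huw₀
      have h1 : t₁ ∈ (resEdges G D).filter fun t => u ∈ G.neighborFinset t :=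
        mem_filter.mpr ⟨ht₁E, by rw [hNe1]; exact hue⟩
      have h2 : t₂ ∈ (resEdges G D).filter fun t => u ∈ G.neighborFinset t :=
        mem_filter.mpr ⟨ht₂E, by rw [hNe2]; exact hue⟩
      exact ht12 (Finset.card_le_one.mp (le_of_eq hdegu) _ h1 _ h2)
    obtain ⟨w, hwE, hNw⟩ := mem_image.mp heim
    have hwE' : w ∈ resEdges G (insert v D) := by
      rw [hE', mem_filter]
      exact ⟨hwE, fun hvw => hve (hNw ▸ hvw)⟩
    refine ⟨mem_image.mpr ⟨w, hwE', hNw⟩, ?_, he2⟩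
    intro z hz t ht hzt
    exact hisoe z hz t (hE'subE ht) hzt
  -- arithmetic
  have Hc2 : ((resVerts G (insert v D) \ S).card : ℤ) + 2 ≤ ((resVerts G D \ S).card : ℤ) := by
    exact_mod_cast hcard2
  have Hb : ((resVerts G (insert v D) ∩ S).card : ℤ) ≤ ((resVerts G D ∩ S).card : ℤ) := by
    exact_mod_cast hb
  have Hc : ((resEdges G D \ S).card : ℤ) = ((resEdges G (insert v D) \ S).card : ℤ)
      + ((((resEdges G D).filter (fun w => v ∈ G.neighborFinset w)) \ S).card : ℤ) := by
    exact_mod_cast hc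
  have Hd : ((resEdges G D ∩ S).card : ℤ) = ((resEdges G (insert v D) ∩ S).card : ℤ)
      + ((((resEdges G D).filter (fun w => v ∈ G.neighborFinset w)) ∩ S).card : ℤ) := by
    exact_mod_cast hd
  have HF2 : ((((resEdges G D).filter (fun w => v ∈ G.neighborFinset w)) \ S).card : ℤ)
      + ((((resEdges G D).filter (fun w => v ∈ G.neighborFinset w)) ∩ S).card : ℤ) = 2 := by
    exact_mod_cast hF2
  have Hx : (numTypeX G S D : ℤ) ≤ (numTypeX G S (insert v D) : ℤ) := by exact_mod_cast hx
  have Hpos : (0 : ℤ) ≤ ((((resEdges G D).filter (fun w => v ∈ G.neighborFinset w)) ∩ S).card : ℤ) :=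
    Int.ofNat_nonneg _
  unfold hweight
  linarith
end
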